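/- arXiv:2409.19699 — 4 statements merged into one kernel-verified Lean document; each statement's English description precedes it below -/
import Mathlib

section
/- Let Π be an orthogonal projector and Ω a Hermitian operator with 0 ≤ Ω ≤ 1 satisfying ΩΠ = Π (perfect completeness). Define Ω̂ = (1−Π)Ω(1−Π) and fix 0 < ε ≤ 1. Then the maximum of tr[Ωσ] over all density operators σ with tr[Πσ] ≤ 1−ε equals 1 − (1 − λ_max(Ω̂))ε, where λ_max denotes the largest eigenvalue. -/
open scoped ComplexOrder

open Matrix in
private lemma aux_trace_vecMulVec {d : ℕ} (x : Fin d → ℂ) :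
    (vecMulVec x (star x)).trace = star x ⬝ᵥ x := by
  simp [Matrix.trace, Matrix.diag, vecMulVec_apply, dotProduct, mul_comm]

open Matrix in
private lemma aux_trace_mul_vecMulVec {d : ℕ} (A : Matrix (Fin d) (Fin d) ℂ) (x y : Fin d → ℂ) :
    (A * vecMulVec x y).trace = y ⬝ᵥ (A *ᵥ x) := by
  simp only [Matrix.trace, Matrix.diag_apply, Matrix.mul_apply, vecMulVec_apply,
    Matrix.mulVec, dotProduct, Finset.mul_sum]
  exact Finset.sum_congr rfl fun i _ => Finset.sum_congr rfl fun j _ => by ring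

open Matrix in
private lemma aux_posSemidef_vecMulVec {d : ℕ} (x : Fin d → ℂ) :
    (vecMulVec x (star x)).PosSemidef := by
  rw [vecMulVec_eq Unit, ← conjTranspose_replicateCol]
  exact posSemidef_self_mul_conjTranspose _

open Matrix in
private lemma aux_smul_psd {d : ℕ} {c : ℝ} {M : Matrix (Fin d) (Fin d) ℂ}
    (hc : 0 ≤ c) (hM : M.PosSemidef) : ((c : ℂ) • M).PosSemidef := by
  constructor
  · rw [Matrix.IsHermitian, Matrix.conjTranspose_smul, hM.1.eq]
    simp [Complex.conj_ofReal]
  · intro y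
    exact (hM.smul (Complex.zero_le_real.mpr hc)).2 y

open Matrix in
private lemma aux_trace_re_nonneg {d : ℕ} {M : Matrix (Fin d) (Fin d) ℂ}
    (hM : M.PosSemidef) : 0 ≤ M.trace.re := by
  have h : ∀ i, 0 ≤ (M i i).re := fun i => by
    have := hM.re_dotProduct_nonneg (Pi.single i 1)
    simpa [Matrix.mulVec_single, dotProduct, Pi.single_apply] using this
  simp only [Matrix.trace, Complex.re_sum]
  exact Finset.sum_nonneg fun i _ => h i

open Matrix in
private lemma aux_trace_mul_re_nonneg {d : ℕ} {A B : Matrix (Fin d) (Fin d) ℂ}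
    (hA : A.PosSemidef) (hB : B.PosSemidef) : 0 ≤ ((A * B).trace).re := by
  obtain ⟨C, rfl⟩ : ∃ C : Matrix (Fin d) (Fin d) ℂ, A = Cᴴ * C := by
    open scoped MatrixOrder in
    obtain ⟨C, hC⟩ := CStarAlgebra.nonneg_iff_eq_star_mul_self.mp hA.nonneg
    exact ⟨C, hC⟩
  rw [Matrix.mul_assoc, Matrix.trace_mul_comm]
  exact aux_trace_re_nonneg (hB.mul_mul_conjTranspose_same C)

open Matrix in
private lemma aux_psd_smul_one_sub {d : ℕ} {A : Matrix (Fin d) (Fin d) ℂ}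
    (hA : A.IsHermitian) {c : ℝ} (h : ∀ i, hA.eigenvalues i ≤ c) :
    ((c : ℂ) • (1 : Matrix (Fin d) (Fin d) ℂ) - A).PosSemidef := by
  have hU : (hA.eigenvectorUnitary : Matrix (Fin d) (Fin d) ℂ) *
      star (hA.eigenvectorUnitary : Matrix (Fin d) (Fin d) ℂ) = 1 :=
    (Matrix.mem_unitaryGroup_iff).mp hA.eigenvectorUnitary.2
  have key : (c : ℂ) • (1 : Matrix (Fin d) (Fin d) ℂ) - A
      = (hA.eigenvectorUnitary : Matrix (Fin d) (Fin d) ℂ)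
        * Matrix.diagonal (fun i => ((c - hA.eigenvalues i : ℝ) : ℂ))
        * (hA.eigenvectorUnitary : Matrix (Fin d) (Fin d) ℂ)ᴴ := by
    have hd : Matrix.diagonal (fun i => ((c - hA.eigenvalues i : ℝ) : ℂ))
        = (c : ℂ) • (1 : Matrix (Fin d) (Fin d) ℂ)
          - Matrix.diagonal (RCLike.ofReal ∘ hA.eigenvalues) := by
      ext i j
      by_cases hij : i = j
      · subst hij
        simp [Matrix.diagonal_apply_eq, Matrix.one_apply_eq]
      · simp [Matrix.diagonal_apply_ne _ hij, Matrix.one_apply_ne hij]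
    rw [hd, Matrix.mul_sub, Matrix.sub_mul, Matrix.mul_smul, mul_one, Matrix.smul_mul,
      ← Matrix.star_eq_conjTranspose, hU]
    congr 1
    exact hA.spectral_theorem
  rw [key]
  exact (Matrix.PosSemidef.mul_mul_conjTranspose_same
    (Matrix.posSemidef_diagonal_iff.mpr fun i => by
      rw [Complex.zero_le_real]; linarith [h i]) _)

open Matrix in
private lemma aux_unit_dot {d : ℕ} {A : Matrix (Fin d) (Fin d) ℂ} (hA : A.IsHermitian)
    (i : Fin d) : star ⇑(hA.eigenvectorBasis i) ⬝ᵥ ⇑(hA.eigenvectorBasis i) = 1 := by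
  have h1 := hA.eigenvectorBasis.orthonormal.1 i
  have h2 := EuclideanSpace.inner_eq_star_dotProduct (𝕜 := ℂ)
    (hA.eigenvectorBasis i) (hA.eigenvectorBasis i)
  rw [inner_self_eq_norm_sq_to_K, h1] at h2
  rw [dotProduct_comm]
  simpa using h2.symm

open Matrix in
private lemma aux_eig_le {d : ℕ} {A : Matrix (Fin d) (Fin d) ℂ} (hA : A.IsHermitian) {c : ℝ}
    (h : ((c : ℂ) • (1 : Matrix (Fin d) (Fin d) ℂ) - A).PosSemidef) (i : Fin d) :
    hA.eigenvalues i ≤ c := by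
  have hvv := aux_unit_dot hA i
  have h3 := h.re_dotProduct_nonneg ⇑(hA.eigenvectorBasis i)
  rw [Matrix.sub_mulVec, Matrix.smul_mulVec, Matrix.one_mulVec,
    hA.mulVec_eigenvectorBasis, dotProduct_sub, dotProduct_smul, dotProduct_smul,
    hvv] at h3
  simp only [map_sub, smul_eq_mul, mul_one, RCLike.smul_re, RCLike.one_re,
    RCLike.ofReal_re, RCLike.re_to_complex, Complex.ofReal_re] at h3
  linarith

open Matrix in
private lemma aux_exists_mulVec_ne {d : ℕ} {M : Matrix (Fin d) (Fin d) ℂ} (hM : M ≠ 0) :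
    ∃ v, M *ᵥ v ≠ 0 := by
  by_contra h
  push_neg at h
  apply hM
  ext i j
  have := congrFun (h (Pi.single j 1)) i
  simpa [Matrix.mulVec_single] using this

open Matrix in
private lemma aux_normalize {d : ℕ} {x : Fin d → ℂ} (hx : x ≠ 0) :
    ∃ (y : Fin d → ℂ) (t : ℝ), 0 < t ∧ y = (t : ℂ) • x ∧ star y ⬝ᵥ y = 1 := by
  have hr : star x ⬝ᵥ x = ((∑ i, Complex.normSq (x i) : ℝ) : ℂ) := by
    push_cast
    simp [dotProduct, Complex.normSq_eq_conj_mul_self]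
  set r : ℝ := ∑ i, Complex.normSq (x i) with hrdef
  have hrpos : 0 < r := by
    obtain ⟨i, hi⟩ := Function.ne_iff.mp hx
    exact Finset.sum_pos' (fun j _ => Complex.normSq_nonneg _)
      ⟨i, Finset.mem_univ i, Complex.normSq_pos.mpr hi⟩
  refine ⟨((Real.sqrt r)⁻¹ : ℝ) • x, (Real.sqrt r)⁻¹, by positivity,
    by ext j; simp [Complex.real_smul], ?_⟩
  have hs : Real.sqrt r ≠ 0 := by positivity
  rw [star_smul, smul_dotProduct, dotProduct_smul, hr]
  simp only [star_trivial]
  rw [smul_smul, Complex.real_smul]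
  norm_cast
  field_simp
  exact (Real.sq_sqrt hrpos.le).symm

open Matrix

/-- **worst-case passing probability.** Let `P` be an orthogonal projector
(`P ≠ 0`, `P ≠ 1`) and `Ω` a Hermitian operator with `0 ≤ Ω ≤ 1` satisfying the perfect
completeness condition `ΩP = P`.  Let `Ω̂ = (1−P)Ω(1−P)` and fix `0 < ε ≤ 1`.  Then the
maximum of `tr[Ωσ]` over all density operators `σ` with `tr[Pσ] ≤ 1−ε` equals
`1 − (1 − λ_max(Ω̂))ε`, where `λ_max` is the largest eigenvalue. -/
theorem worst_case_passing_probability {d : ℕ} (hd : 0 < d)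
    (P Ω : Matrix (Fin d) (Fin d) ℂ)
    (hPherm : P.IsHermitian) (hPproj : P * P = P)
    (hPne0 : P ≠ 0) (hPne1 : P ≠ 1)
    (hΩherm : Ω.IsHermitian) (hΩpos : Ω.PosSemidef) (hΩle : (1 - Ω).PosSemidef)
    (hcompl : Ω * P = P)
    (ε : ℝ) (hε : 0 < ε) (hε1 : ε ≤ 1)
    (hherm : ((1 - P) * Ω * (1 - P)).IsHermitian) :
    IsGreatest
      {x : ℝ | ∃ σ : Matrix (Fin d) (Fin d) ℂ,
        σ.PosSemidef ∧ σ.trace = 1 ∧ ((P * σ).trace).re ≤ 1 - ε ∧ ((Ω * σ).trace).re = x}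
      (1 - (1 - ⨆ i, hherm.eigenvalues i) * ε) := by
  haveI : NeZero d := ⟨hd.ne'⟩
  have hPΩ : P * Ω = P := by
    have := congrArg Matrix.conjTranspose hcompl
    rwa [Matrix.conjTranspose_mul, hPherm.eq, hΩherm.eq] at this
  have hPΩP : P * Ω * P = P := by rw [hPΩ, hPproj]
  have hhat : (1 - P) * Ω * (1 - P) = Ω - P := by
    have expand : (1 - P) * Ω * (1 - P) = Ω - P * Ω - Ω * P + P * Ω * P := by noncomm_ring
    rw [expand, hPΩ, hcompl, hPproj]
    abel
  have hP1P : P * (1 - P) = 0 := by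
    rw [Matrix.mul_sub, mul_one, hPproj, sub_self]
  set μ := ⨆ i, hherm.eigenvalues i with hμdef
  have h1Ph : (1 - P).conjTranspose = 1 - P := by
    rw [Matrix.conjTranspose_sub, Matrix.conjTranspose_one, hPherm.eq]
  have hhatpsd : ((1 - P) * Ω * (1 - P)).PosSemidef := by
    have := hΩpos.mul_mul_conjTranspose_same (1 - P)
    rwa [h1Ph] at this
  have hμ_ge : ∀ i, hherm.eigenvalues i ≤ μ := fun i =>
    le_ciSup (Set.Finite.bddAbove (Set.finite_range _)) i
  have hμ0 : 0 ≤ μ :=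
    le_trans (hhatpsd.eigenvalues_nonneg ⟨0, hd⟩) (hμ_ge _)
  have hPpsd : P.PosSemidef := by
    have h : P = P.conjTranspose * P := by rw [hPherm.eq, hPproj]
    rw [h]
    exact Matrix.posSemidef_conjTranspose_mul_self P
  have hμ1 : μ ≤ 1 := by
    have h1 : ((1 : ℝ) : ℂ) • (1 : Matrix (Fin d) (Fin d) ℂ) - (1 - P) * Ω * (1 - P)
        = (1 - Ω) + P := by
      rw [hhat]
      push_cast
      rw [one_smul]
      abel
    have h2 : (((1 : ℝ) : ℂ) • (1 : Matrix (Fin d) (Fin d) ℂ)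
        - (1 - P) * Ω * (1 - P)).PosSemidef := by
      rw [h1]; exact hΩle.add hPpsd
    exact ciSup_le fun i => aux_eig_le hherm h2 i
  constructor
  · -- membership: construct the optimal σ
    obtain ⟨v0, hv0⟩ := aux_exists_mulVec_ne hPne0
    have hw : P *ᵥ (P *ᵥ v0) = P *ᵥ v0 := by rw [Matrix.mulVec_mulVec, hPproj]
    obtain ⟨ψ, t1, ht1, hψdef, hψunit⟩ := aux_normalize hv0
    have hPψ : P *ᵥ ψ = ψ := by rw [hψdef, Matrix.mulVec_smul, hw]
    have hΩψ : Ω *ᵥ ψ = ψ := by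
      conv_lhs => rw [← hPψ]
      rw [Matrix.mulVec_mulVec, hcompl, hPψ]
    obtain ⟨φ, hφunit, hPφ, hΩφ⟩ :
        ∃ φ : Fin d → ℂ, star φ ⬝ᵥ φ = 1 ∧ P *ᵥ φ = 0 ∧ Ω *ᵥ φ = (μ : ℂ) • φ := by
      rcases hμ0.eq_or_lt with hμe | hμpos
      · -- μ = 0 : then Ω = P
        have heig0 : ∀ i, hherm.eigenvalues i = 0 := fun i =>
          le_antisymm (hμe ▸ hμ_ge i) (hhatpsd.eigenvalues_nonneg i)
        have hhat0 : (1 - P) * Ω * (1 - P) = 0 := by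
          have hs := hherm.spectral_theorem
          rw [show (RCLike.ofReal ∘ hherm.eigenvalues : Fin d → ℂ) = fun _ => 0 from
            funext fun i => by simp [heig0 i]] at hs
          simpa using hs
        have hΩP : Ω = P := by
          have := hhat.symm.trans hhat0
          exact sub_eq_zero.mp this
        obtain ⟨v1, hv1⟩ := aux_exists_mulVec_ne (M := 1 - P) (sub_ne_zero.mpr (Ne.symm hPne1))
        obtain ⟨φ, t2, ht2, hφdef, hφunit⟩ := aux_normalize hv1
        have hPφ : P *ᵥ φ = 0 := by
          rw [hφdef, Matrix.mulVec_smul, Matrix.mulVec_mulVec, hP1P, Matrix.zero_mulVec,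
            smul_zero]
        refine ⟨φ, hφunit, hPφ, ?_⟩
        rw [hΩP, hPφ, ← hμe]
        simp
      · -- μ > 0 : take the top eigenvector
        obtain ⟨i0, hi0⟩ := exists_eq_ciSup_of_finite (f := hherm.eigenvalues)
        set φ := ⇑(hherm.eigenvectorBasis i0) with hφdef
        have hφunit := aux_unit_dot hherm i0
        have hEφ : ((1 - P) * Ω * (1 - P)) *ᵥ φ = hherm.eigenvalues i0 • φ :=
          hherm.mulVec_eigenvectorBasis i0
        have hPhat : P * ((1 - P) * Ω * (1 - P)) = 0 := by
          rw [← Matrix.mul_assoc, ← Matrix.mul_assoc, hP1P, Matrix.zero_mul, Matrix.zero_mul]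
        have hPφ : P *ᵥ φ = 0 := by
          have h1 : P *ᵥ (((1 - P) * Ω * (1 - P)) *ᵥ φ) = 0 := by
            rw [Matrix.mulVec_mulVec, hPhat, Matrix.zero_mulVec]
          rw [hEφ, Matrix.mulVec_smul] at h1
          have hne : hherm.eigenvalues i0 ≠ 0 := by
            rw [hi0, ← hμdef]; exact ne_of_gt hμpos
          exact (smul_eq_zero.mp h1).resolve_left hne
        refine ⟨φ, hφunit, hPφ, ?_⟩
        have h2 : (Ω - P) *ᵥ φ = hherm.eigenvalues i0 • φ := by
          rw [← hhat]; exact hEφ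
        rw [Matrix.sub_mulVec, hPφ, sub_zero] at h2
        rw [h2, hi0, ← hμdef]
        ext j
        simp [Complex.real_smul]
    set σ : Matrix (Fin d) (Fin d) ℂ :=
      ((1 - ε : ℝ) : ℂ) • Matrix.vecMulVec ψ (star ψ)
        + ((ε : ℝ) : ℂ) • Matrix.vecMulVec φ (star φ) with hσdef
    have hPσtr : (P * σ).trace = ((1 - ε : ℝ) : ℂ) := by
      rw [hσdef, Matrix.mul_add, Matrix.mul_smul, Matrix.mul_smul, Matrix.trace_add,
        Matrix.trace_smul, Matrix.trace_smul, aux_trace_mul_vecMulVec,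
        aux_trace_mul_vecMulVec, hPψ, hPφ, hψunit]
      simp
    have hΩσtr : (Ω * σ).trace = ((1 - ε : ℝ) : ℂ) + ((ε : ℝ) : ℂ) * (μ : ℂ) := by
      rw [hσdef, Matrix.mul_add, Matrix.mul_smul, Matrix.mul_smul, Matrix.trace_add,
        Matrix.trace_smul, Matrix.trace_smul, aux_trace_mul_vecMulVec,
        aux_trace_mul_vecMulVec, hΩψ, hΩφ, hψunit, dotProduct_smul, hφunit]
      simp
    refine ⟨σ, ?_, ?_, ?_, ?_⟩
    · exact (aux_smul_psd (by linarith) (aux_posSemidef_vecMulVec ψ)).add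
        (aux_smul_psd hε.le (aux_posSemidef_vecMulVec φ))
    · rw [hσdef, Matrix.trace_add, Matrix.trace_smul, Matrix.trace_smul,
        aux_trace_vecMulVec, aux_trace_vecMulVec, hψunit, hφunit]
      simp only [smul_eq_mul, mul_one]
      push_cast
      ring
    · rw [hPσtr]
      simp
    · rw [hΩσtr]
      simp only [Complex.add_re, Complex.ofReal_re, Complex.mul_re, Complex.ofReal_im,
        zero_mul, sub_zero]
      ring
  · -- upper bound
    rintro x ⟨σ, hσpsd, hσtr, hPσ, rfl⟩
    have hQpsd : ((μ : ℂ) • (1 : Matrix (Fin d) (Fin d) ℂ)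
        - (1 - P) * Ω * (1 - P)).PosSemidef := aux_psd_smul_one_sub hherm hμ_ge
    have hQQ : (1 - P) * (1 - P) = 1 - P := by
      have h : (1 - P) * (1 - P) = 1 - P - P + P * P := by noncomm_ring
      rw [h, hPproj]; abel
    have hQP : (1 - P) * P = 0 := by
      rw [Matrix.sub_mul, one_mul, hPproj, sub_self]
    have hQE : (1 - P) * (Ω - P) * (1 - P) = Ω - P := by
      have h1 : (1 - P) * (Ω - P) = (1 - P) * Ω := by rw [mul_sub, hQP, sub_zero]
      rw [h1, hhat]
    have hid : (1 - P) * (((μ : ℂ) • (1 : Matrix (Fin d) (Fin d) ℂ)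
        - (1 - P) * Ω * (1 - P))) * (1 - P) = (μ : ℂ) • (1 - P) - (Ω - P) := by
      have h1 : (1 - P) * ((μ : ℂ) • (1 : Matrix (Fin d) (Fin d) ℂ) - (Ω - P))
          = (μ : ℂ) • (1 - P) - (1 - P) * (Ω - P) := by
        rw [mul_sub, Matrix.mul_smul, mul_one]
      have h2 : ((μ : ℂ) • (1 - P) - (1 - P) * (Ω - P)) * (1 - P)
          = (μ : ℂ) • ((1 - P) * (1 - P)) - (1 - P) * (Ω - P) * (1 - P) := by
        rw [sub_mul, Matrix.smul_mul]
      rw [hhat, h1, h2, hQQ, hQE]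
    have hM : ((μ : ℂ) • (1 - P) - (Ω - P)).PosSemidef := by
      rw [← hid]
      have := hQpsd.mul_mul_conjTranspose_same (1 - P)
      rwa [h1Ph] at this
    have h0 := aux_trace_mul_re_nonneg hM hσpsd
    have hexp : (((μ : ℂ) • (1 - P) - (Ω - P)) * σ).trace
        = (μ : ℂ) * (σ.trace - (P * σ).trace) - ((Ω - P) * σ).trace := by
      rw [Matrix.sub_mul, Matrix.smul_mul, Matrix.trace_sub, Matrix.trace_smul,
        Matrix.sub_mul, one_mul, Matrix.trace_sub]
      simp [smul_eq_mul]
    rw [hexp, hσtr] at h0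
    have hsplit : (Ω * σ).trace = (P * σ).trace + ((Ω - P) * σ).trace := by
      rw [← Matrix.trace_add, ← Matrix.add_mul]
      congr 2
      abel
    rw [hsplit]
    simp only [Complex.add_re, Complex.sub_re, Complex.mul_re, Complex.ofReal_re,
      Complex.ofReal_im, Complex.one_re, zero_mul, sub_zero] at h0 ⊢
    nlinarith [mul_nonneg (by linarith : (0:ℝ) ≤ 1 - μ)
      (by linarith : (0:ℝ) ≤ 1 - ε - ((P * σ).trace).re)]
end

section
/- Under the hypotheses of the stabilizer-group strategy, the verification operator Ω_I = (1/(2^{n−k}−1)) Σ_{P∈S\{I}} (P+I)/2 has spectral gap ν(Ω_I) := 1 − λ_max((I−Π)Ω_I(I−Π)) equal to 2^{n−k−1}/(2^{n−k}−1). -/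
open scoped Classical
open Matrix

lemma trace_eq_sum_eigs' {N : ℕ} {A : Matrix (Fin N) (Fin N) ℂ} (hA : A.IsHermitian) :
    A.trace = ∑ i, (hA.eigenvalues i : ℂ) := by
  conv_lhs => rw [hA.spectral_theorem]
  rw [Unitary.conjStarAlgAut_apply, Matrix.trace_mul_cycle, Unitary.coe_star_mul_self, Matrix.one_mul,
    Matrix.trace_diagonal]
  rfl

/-- For the stabilizer group `S` (order `2^(n-k)`, abelian, `-1 ∉ S`,
nonidentity elements traceless) of an `[[n,k,d]]` stabilizer code with code-space
projector `Π`, the verification operator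
`Ω_I = (2^{n-k}-1)⁻¹ ∑_{P∈S\{1}} (P+1)/2` has spectral gap
`ν(Ω_I) = 1 − λ_max((1−Π)Ω_I(1−Π)) = 2^{n-k-1}/(2^{n-k}-1)`. -/
theorem stabilizer_group_strategy_spectral_gap {n k : ℕ} (hkn : k < n)
    (S : Finset (Matrix (Fin (2 ^ n)) (Fin (2 ^ n)) ℂ))
    (hone : (1 : Matrix (Fin (2 ^ n)) (Fin (2 ^ n)) ℂ) ∈ S)
    (hmul : ∀ P ∈ S, ∀ Q ∈ S, P * Q ∈ S)
    (hcomm : ∀ P ∈ S, ∀ Q ∈ S, P * Q = Q * P)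
    (hherm : ∀ P ∈ S, P.IsHermitian)
    (hinv : ∀ P ∈ S, P * P = 1)
    (hnegI : (-1 : Matrix (Fin (2 ^ n)) (Fin (2 ^ n)) ℂ) ∉ S)
    (htr : ∀ P ∈ S, P ≠ 1 → P.trace = 0)
    (hcard : S.card = 2 ^ (n - k))
    (Pi Ω : Matrix (Fin (2 ^ n)) (Fin (2 ^ n)) ℂ)
    (hPi : Pi = ((2 : ℂ) ^ (n - k))⁻¹ • ∑ P ∈ S, P)
    (hΩ : Ω = ((2 : ℂ) ^ (n - k) - 1)⁻¹ • ∑ P ∈ S.erase 1, (2 : ℂ)⁻¹ • (P + 1))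
    (hherm' : ((1 - Pi) * Ω * (1 - Pi)).IsHermitian) :
    1 - (⨆ i, hherm'.eigenvalues i)
      = (2 : ℝ) ^ (n - k - 1) / ((2 : ℝ) ^ (n - k) - 1) := by
  classical
  haveI : Nonempty (Fin (2 ^ n)) := ⟨⟨0, Nat.pow_pos (by norm_num)⟩⟩
  obtain ⟨e, he⟩ : ∃ e, n - k = e + 1 := ⟨n - k - 1, by omega⟩
  have heq : n - k - 1 = e := by omega
  have h1lt : (1:ℝ) < 2 ^ (n - k) := by
    rw [he]; exact one_lt_pow₀ one_lt_two (by omega)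
  have h2R : (0:ℝ) < 2 ^ (n - k) - 1 := by linarith
  have h2Rne : ((2:ℝ) ^ (n - k) - 1) ≠ 0 := ne_of_gt h2R
  have h2C : (2:ℂ) ^ (n - k) ≠ 0 := pow_ne_zero _ two_ne_zero
  have h2Cne : ((2:ℂ) ^ (n - k) - 1) ≠ 0 := by
    have h : ((2:ℂ) ^ (n - k) - 1) = (((2:ℝ) ^ (n - k) - 1 : ℝ) : ℂ) := by push_cast; ring
    rw [h]
    exact Complex.ofReal_ne_zero.mpr h2Rne
  -- the sum over S
  have hsum : (∑ P ∈ S, P) = (2:ℂ) ^ (n - k) • Pi := by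
    rw [hPi, smul_smul, mul_inv_cancel₀ h2C, one_smul]
  -- Pi is a projector
  have hPi2 : Pi * Pi = Pi := by
    have key : ∀ P ∈ S, ∑ Q ∈ S, P * Q = ∑ R ∈ S, R := by
      intro P hP
      refine Finset.sum_nbij' (fun Q => P * Q) (fun R => P * R)
        (fun Q hQ => hmul P hP Q hQ) (fun R hR => hmul P hP R hR) ?_ ?_ (fun Q hQ => rfl)
      · intro Q hQ; rw [← mul_assoc, hinv P hP, one_mul]
      · intro R hR; rw [← mul_assoc, hinv P hP, one_mul]
    have h1 : (∑ P ∈ S, P) * (∑ Q ∈ S, Q) = (2:ℂ) ^ (n - k) • ∑ R ∈ S, R := by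
      rw [Finset.sum_mul]
      have h2 : ∀ P ∈ S, P * (∑ Q ∈ S, Q) = ∑ R ∈ S, R := by
        intro P hP; rw [Finset.mul_sum]; exact key P hP
      rw [Finset.sum_congr rfl h2, Finset.sum_const, hcard, ← Nat.cast_smul_eq_nsmul ℂ]
      push_cast
      ring_nf
    rw [hPi, Matrix.smul_mul, Matrix.mul_smul, h1, smul_smul, smul_smul]
    congr 1
    field_simp
  have hq : (1 - Pi) * Pi = 0 := by
    rw [Matrix.sub_mul, Matrix.one_mul, hPi2, sub_self]
  have hqq : (1 - Pi) * (1 - Pi) = 1 - Pi := by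
    rw [Matrix.mul_sub, Matrix.mul_one, hq, sub_zero]
  -- rewrite Ω
  have herase : ∑ P ∈ S.erase 1, P = (2:ℂ) ^ (n - k) • Pi - 1 := by
    rw [Finset.sum_erase_eq_sub hone, hsum]
  have hcarde : (S.erase 1).card = 2 ^ (n - k) - 1 := by
    rw [Finset.card_erase_of_mem hone, hcard]
  have hΩ2 : Ω = ((2:ℂ) ^ (n - k) - 1)⁻¹ •
      ((2:ℂ)⁻¹ • ((2:ℂ) ^ (n - k) • Pi + ((2:ℂ) ^ (n - k) - 2) • 1)) := by
    rw [hΩ]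
    congr 1
    rw [← Finset.smul_sum]
    congr 1
    rw [Finset.sum_add_distrib, herase, Finset.sum_const, hcarde,
      ← Nat.cast_smul_eq_nsmul ℂ]
    have hc : ((2 ^ (n - k) - 1 : ℕ) : ℂ) = (2:ℂ) ^ (n - k) - 1 := by
      have h1n : (1:ℕ) ≤ 2 ^ (n - k) := Nat.one_le_two_pow
      push_cast [h1n]
      ring
    rw [hc]
    module
  -- the scalar
  set cR : ℝ := ((2:ℝ) ^ e - 1) / ((2:ℝ) ^ (n - k) - 1) with hcRdef
  have hcR0 : 0 ≤ cR := by
    apply div_nonneg _ h2R.le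
    have h1e : (1:ℝ) ≤ 2 ^ e := one_le_pow₀ (by norm_num)
    linarith
  have hmid : (1 - Pi) * ((2:ℂ) ^ (n - k) • Pi + ((2:ℂ) ^ (n - k) - 2) • 1) * (1 - Pi)
      = ((2:ℂ) ^ (n - k) - 2) • (1 - Pi) := by
    rw [Matrix.mul_add, Matrix.mul_smul, Matrix.mul_smul, Matrix.mul_one, hq, smul_zero,
      zero_add, Matrix.smul_mul, hqq]
  have hM : (1 - Pi) * Ω * (1 - Pi) = (cR : ℂ) • (1 - Pi) := by
    rw [hΩ2, Matrix.mul_smul, Matrix.mul_smul, Matrix.smul_mul, Matrix.smul_mul, hmid,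
      smul_smul, smul_smul]
    congr 1
    have hpowC : (2:ℂ) ^ (n - k) = 2 * 2 ^ e := by rw [he, pow_succ]; ring
    have hcC : ((cR : ℝ) : ℂ) = ((2:ℂ) ^ e - 1) / ((2:ℂ) ^ (n - k) - 1) := by
      rw [hcRdef]; push_cast; ring
    rw [hcC, hpowC]
    rw [hpowC] at h2Cne
    field_simp
  have hMM : ((1 - Pi) * Ω * (1 - Pi)) * ((1 - Pi) * Ω * (1 - Pi))
      = (cR : ℂ) • ((1 - Pi) * Ω * (1 - Pi)) := by
    rw [hM, Matrix.smul_mul, Matrix.mul_smul, hqq]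
  -- every eigenvalue is 0 or cR
  have hev : ∀ i, hherm'.eigenvalues i = 0 ∨ hherm'.eigenvalues i = cR := by
    intro i
    have hv := hherm'.mulVec_eigenvectorBasis i
    set lam := hherm'.eigenvalues i with hlam
    set v : Fin (2 ^ n) → ℂ := ⇑(hherm'.eigenvectorBasis i) with hvdef
    have hvne : v ≠ 0 := by
      intro h
      exact hherm'.eigenvectorBasis.orthonormal.ne_zero i (by ext j; exact congrFun h j)
    obtain ⟨j, hj⟩ : ∃ j, v j ≠ 0 := by
      by_contra hall; push_neg at hall; exact hvne (funext hall)
    have h2 : ((1 - Pi) * Ω * (1 - Pi) * ((1 - Pi) * Ω * (1 - Pi))) *ᵥ v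
        = lam • lam • v := by
      rw [← Matrix.mulVec_mulVec, hv, Matrix.mulVec_smul, hv]
    have h3 : ((1 - Pi) * Ω * (1 - Pi) * ((1 - Pi) * Ω * (1 - Pi))) *ᵥ v
        = (cR : ℂ) • (lam • v) := by
      rw [hMM, Matrix.smul_mulVec, hv]
    have h4 := h2.symm.trans h3
    have h5 : (lam : ℂ) * ((lam : ℂ) * v j) = (cR : ℂ) * ((lam : ℂ) * v j) := by
      have := congrFun h4 j
      simpa [Pi.smul_apply, Complex.real_smul, smul_eq_mul, mul_assoc] using this
    have h5' : ((lam : ℂ) - (cR : ℂ)) * ((lam : ℂ) * v j) = 0 := by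
      rw [sub_mul, h5, sub_self]
    rcases mul_eq_zero.mp h5' with h | h
    · right; exact_mod_cast sub_eq_zero.mp h
    · rcases mul_eq_zero.mp h with h | h
      · left; exact_mod_cast h
      · exact absurd h hj
  -- traces
  have htrPi : Pi.trace = (2:ℂ) ^ k := by
    rw [hPi, Matrix.trace_smul, Matrix.trace_sum,
      Finset.sum_eq_single_of_mem 1 hone (fun P hP hne => htr P hP hne), Matrix.trace_one]
    have hn2 : ((Fintype.card (Fin (2 ^ n)) : ℕ) : ℂ) = (2:ℂ) ^ (n - k) * 2 ^ k := by
      simp only [Fintype.card_fin]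
      push_cast
      rw [← pow_add]
      congr 1
      omega
    rw [smul_eq_mul, hn2, inv_mul_cancel_left₀ h2C]
  have htrQ : ((1 : Matrix (Fin (2 ^ n)) (Fin (2 ^ n)) ℂ) - Pi).trace
      = (2:ℂ) ^ n - (2:ℂ) ^ k := by
    rw [Matrix.trace_sub, Matrix.trace_one, htrPi]
    congr 1
    simp only [Fintype.card_fin]
    push_cast
    ring
  have htrM : ∑ i, hherm'.eigenvalues i = cR * ((2:ℝ) ^ n - (2:ℝ) ^ k) := by
    have h1 := trace_eq_sum_eigs' hherm'
    have h1' : ((1 - Pi) * Ω * (1 - Pi)).trace = (cR : ℂ) * ((2:ℂ) ^ n - (2:ℂ) ^ k) := by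
      rw [hM, Matrix.trace_smul, htrQ, smul_eq_mul]
    have h3 := h1.symm.trans h1'
    have h2 : ((∑ i, hherm'.eigenvalues i : ℝ) : ℂ)
        = ((cR * ((2:ℝ) ^ n - (2:ℝ) ^ k) : ℝ) : ℂ) := by
      push_cast
      rw [h3]
    exact_mod_cast h2
  have hnbdd : BddAbove (Set.range hherm'.eigenvalues) := (Set.finite_range _).bddAbove
  have hsup : (⨆ i, hherm'.eigenvalues i) = cR := by
    apply le_antisymm
    · refine ciSup_le fun i => ?_
      rcases hev i with h | h
      · rw [h]; exact hcR0
      · rw [h]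
    · rcases eq_or_lt_of_le hcR0 with h0 | hpos
      · obtain ⟨i0⟩ := (inferInstance : Nonempty (Fin (2 ^ n)))
        have h1 : cR ≤ hherm'.eigenvalues i0 := by
          rcases hev i0 with h | h
          · rw [h]; exact h0.ge
          · rw [h]
        exact h1.trans (le_ciSup hnbdd i0)
      · obtain ⟨i, hi⟩ : ∃ i, hherm'.eigenvalues i = cR := by
          by_contra hno; push_neg at hno
          have hz : ∀ i, hherm'.eigenvalues i = 0 := fun i => (hev i).resolve_right (hno i)
          have h0' : (0:ℝ) = cR * ((2:ℝ) ^ n - (2:ℝ) ^ k) := by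
            rw [← htrM]
            exact (Finset.sum_eq_zero fun i _ => hz i).symm
          have hlt : (2:ℝ) ^ k < 2 ^ n := by
            exact pow_lt_pow_right₀ one_lt_two hkn
          nlinarith
        exact hi ▸ le_ciSup hnbdd i
  rw [hsup, heq, hcRdef]
  have hpowR : (2:ℝ) ^ (n - k) = 2 * 2 ^ e := by rw [he, pow_succ]; ring
  rw [hpowR] at h2Rne ⊢
  rw [eq_div_iff h2Rne, sub_mul, div_mul_cancel₀ _ h2Rne]
  ring
end

section
/- For any probability distribution μ on the generating set {S_1,…,S_{n−k}} of the stabilizer group of an [[n,k,d]] code with k ≥ 1, the verification operator Ω_μ = Σ_i μ(S_i)(S_i+I)/2 satisfies λ_max((I−Π)Ω_μ(I−Π)) = 1 − min_i μ(S_i) ≥ 1 − 1/(n−k), with equality iff μ is uniform. -/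
set_option maxHeartbeats 1600000
set_option synthInstance.maxHeartbeats 400000
set_option linter.unusedSectionVars false

open Matrix

namespace StabProof

variable {N : Type*} [Fintype N] [DecidableEq N]

lemma dot_self_eq (x : N → ℂ) :
    star x ⬝ᵥ x = ((∑ i, Complex.normSq (x i) : ℝ) : ℂ) := by
  simp [dotProduct, Complex.normSq_eq_conj_mul_self]

lemma dot_self_re_nonneg (x : N → ℂ) : 0 ≤ (star x ⬝ᵥ x).re := by
  rw [dot_self_eq]
  simpa using Finset.sum_nonneg fun i _ => Complex.normSq_nonneg (x i)

lemma dot_self_re_pos {x : N → ℂ} (hx : x ≠ 0) : 0 < (star x ⬝ᵥ x).re := by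
  rw [dot_self_eq]
  simp only [Complex.ofReal_re]
  obtain ⟨i, hi⟩ := Function.ne_iff.mp hx
  exact Finset.sum_pos' (fun j _ => Complex.normSq_nonneg _)
    ⟨i, Finset.mem_univ i, Complex.normSq_pos.mpr hi⟩

lemma herm_shift (K A : Matrix N N ℂ) (hK : Kᴴ = K) (x y : N → ℂ) :
    star x ⬝ᵥ ((K * A) *ᵥ y) = star (K *ᵥ x) ⬝ᵥ (A *ᵥ y) := by
  rw [star_mulVec, hK, ← Matrix.mulVec_mulVec, dotProduct_mulVec]

lemma proj_nonneg {K : Matrix N N ℂ} (hK : Kᴴ = K) (hK2 : K * K = K) (x : N → ℂ) :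
    0 ≤ (star x ⬝ᵥ (K *ᵥ x)).re := by
  have h : star x ⬝ᵥ (K *ᵥ x) = star (K *ᵥ x) ⬝ᵥ (K *ᵥ x) := by
    conv_lhs => rw [← hK2]
    exact herm_shift K K hK x x
  rw [h]; exact dot_self_re_nonneg _

lemma proj_le_self {K : Matrix N N ℂ} (hK : Kᴴ = K) (hK2 : K * K = K) (x : N → ℂ) :
    (star x ⬝ᵥ (K *ᵥ x)).re ≤ (star x ⬝ᵥ x).re := by
  have h1 : (1 - K)ᴴ = 1 - K := by simp [conjTranspose_sub, hK]
  have h2 : (1 - K) * (1 - K) = 1 - K := by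
    simp only [sub_mul, mul_sub, one_mul, mul_one, hK2]; abel
  have := proj_nonneg h1 h2 x
  rw [Matrix.sub_mulVec, Matrix.one_mulVec, dotProduct_sub, Complex.sub_re] at this
  linarith


lemma list_facts (L : List (Matrix N N ℂ))
    (h1 : ∀ A ∈ L, Aᴴ = A) (h2 : ∀ A ∈ L, A * A = A)
    (h3 : ∀ A ∈ L, ∀ B ∈ L, A * B = B * A) :
    L.prodᴴ = L.prod ∧ L.prod * L.prod = L.prod ∧
      ∀ x : N → ℂ, ((star x) ⬝ᵥ ((1 - L.prod) *ᵥ x)).re ≤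
        (L.map (fun P => ((star x) ⬝ᵥ ((1 - P) *ᵥ x)).re)).sum := by
  induction L with
  | nil =>
    refine ⟨by simp, by simp, fun x => ?_⟩
    simp
  | cons P L' ih =>
    have hP1 : Pᴴ = P := h1 P (by simp)
    have hP2 : P * P = P := h2 P (by simp)
    obtain ⟨iH1, iH2, iH3⟩ := ih (fun A hA => h1 A (by simp [hA]))
      (fun A hA => h2 A (by simp [hA]))
      (fun A hA B hB => h3 A (by simp [hA]) B (by simp [hB]))
    set R := L'.prod with hR
    have hPR : P * R = R * P := by
      have : Commute P R := Commute.list_prod_right _ _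
        (fun B hB => (h3 P (by simp) B (by simp [hB])))
      exact this
    have hprod : (P :: L').prod = P * R := by simp [hR]
    have hprodH : (P * R)ᴴ = P * R := by
      rw [conjTranspose_mul, iH1, hP1, ← hPR]
    have hprod2 : (P * R) * (P * R) = P * R := by
      calc (P * R) * (P * R) = P * (R * P) * R := by noncomm_ring
        _ = P * (P * R) * R := by rw [hPR]
        _ = (P * P) * (R * R) := by noncomm_ring
        _ = P * R := by rw [hP2, iH2]
    refine ⟨by rw [hprod, hprodH], by rw [hprod]; exact hprod2, fun x => ?_⟩
    rw [hprod]
    have hB1 : (1 - R)ᴴ = 1 - R := by simp [conjTranspose_sub, iH1]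
    have hB2 : (1 - R) * (1 - R) = 1 - R := by
      simp only [sub_mul, mul_sub, one_mul, mul_one, iH2]; abel
    have hsplit : 1 - P * R = (1 - P) + P * (1 - R) := by noncomm_ring
    have key : ((star x) ⬝ᵥ ((P * (1 - R)) *ᵥ x)).re ≤ ((star x) ⬝ᵥ ((1 - R) *ᵥ x)).re := by
      set B := 1 - R with hBdef
      have hPB : P * B = B * P := by
        simp only [hBdef, mul_sub, sub_mul, mul_one, one_mul, hPR]
      have hfact : P * B = B * (P * B) := by
        calc P * B = P * (B * B) := by rw [hB2]
          _ = (P * B) * B := by noncomm_ring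
          _ = (B * P) * B := by rw [hPB]
          _ = B * (P * B) := by noncomm_ring
      rw [hfact, herm_shift B (P * B) hB1 x x, ← Matrix.mulVec_mulVec]
      have := proj_le_self hP1 hP2 (B *ᵥ x)
      refine le_trans this ?_
      have : star (B *ᵥ x) ⬝ᵥ (B *ᵥ x) = star x ⬝ᵥ (B *ᵥ x) := by
        conv_rhs => rw [← hB2]
        exact (herm_shift B B hB1 x x).symm
      rw [this]
    calc ((star x) ⬝ᵥ ((1 - P * R) *ᵥ x)).re
        = ((star x) ⬝ᵥ ((1 - P) *ᵥ x)).re + ((star x) ⬝ᵥ ((P * (1 - R)) *ᵥ x)).re := by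
          rw [hsplit, Matrix.add_mulVec, dotProduct_add, Complex.add_re]
      _ ≤ ((star x) ⬝ᵥ ((1 - P) *ᵥ x)).re + ((star x) ⬝ᵥ ((1 - R) *ᵥ x)).re := by linarith
      _ ≤ ((star x) ⬝ᵥ ((1 - P) *ᵥ x)).re +
          (L'.map (fun P => ((star x) ⬝ᵥ ((1 - P) *ᵥ x)).re)).sum := by linarith [iH3 x]
      _ = _ := by simp


lemma range_comm {m : ℕ} (S : Fin m → Matrix N N ℂ)
    (hcomm : ∀ i j, S i * S j = S j * S i) :
    ∀ a ∈ Set.range S, ∀ b ∈ Set.range S, a * b = b * a := by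
  rintro a ⟨i, rfl⟩ b ⟨j, rfl⟩; exact hcomm i j

lemma trace_eps {m : ℕ} (S : Fin m → Matrix N N ℂ)
    (hcomm : ∀ i j, S i * S j = S j * S i)
    (htr : ∀ y : Fin m → ZMod 2, y ≠ 0 →
      (List.ofFn fun i => S i ^ (y i).val).prod.trace = 0)
    (ε : Fin m → ℂ) :
    (List.ofFn fun i => (2:ℂ)⁻¹ • (1 + ε i • S i)).prod.trace
      = (2:ℂ)⁻¹ ^ m * (Fintype.card N) := by
  letI : CommRing (Algebra.adjoin ℂ (Set.range S)) :=
    Algebra.adjoinCommRingOfComm ℂ (range_comm S hcomm)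
  set S' : Fin m → Algebra.adjoin ℂ (Set.range S) :=
    fun i => ⟨S i, Algebra.subset_adjoin ⟨i, rfl⟩⟩ with hS'
  set u : Fin m → Algebra.adjoin ℂ (Set.range S) :=
    fun i => (2:ℂ)⁻¹ • (1 + ε i • S' i) with hu
  have hcoe : (List.ofFn fun i => (2:ℂ)⁻¹ • (1 + ε i • S i)).prod
      = ((List.ofFn u).prod : Algebra.adjoin ℂ (Set.range S)) := by
    have h1 : (List.ofFn fun i => (2:ℂ)⁻¹ • (1 + ε i • S i))
        = (List.ofFn u).map (Subalgebra.val _) := by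
      rw [List.map_ofFn]
      rfl
    rw [h1]
    exact (map_list_prod ((Algebra.adjoin ℂ (Set.range S)).val) (List.ofFn u)).symm
  -- trace of the subset products
  have htrace_subset : ∀ t : Finset (Fin m),
      Matrix.trace (((∏ i ∈ t, S' i : Algebra.adjoin ℂ (Set.range S))) : Matrix N N ℂ)
        = if t = ∅ then (Fintype.card N : ℂ) else 0 := by
    intro t
    by_cases ht : t = ∅
    · subst ht
      simp [Subalgebra.coe_one, Matrix.trace_one]
    · rw [if_neg ht]
      set y : Fin m → ZMod 2 := fun i => if i ∈ t then 1 else 0 with hy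
      have hy0 : y ≠ 0 := by
        obtain ⟨i, hi⟩ := Finset.nonempty_of_ne_empty ht
        intro h
        have := congrFun h i
        simp [hy, hi] at this
      have hEq : ((∏ i ∈ t, S' i : Algebra.adjoin ℂ (Set.range S)) : Matrix N N ℂ)
          = (List.ofFn fun i => S i ^ (y i).val).prod := by
        have h2 : (List.ofFn fun i => S i ^ (y i).val)
            = (List.ofFn fun i => (if i ∈ t then S' i else 1 :
                Algebra.adjoin ℂ (Set.range S))).map (Subalgebra.val _) := by
          rw [List.map_ofFn]
          congr 1
          funext i
          by_cases hi : i ∈ t <;>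
            simp [hy, hi, hS', Subalgebra.coe_one, show (1:ZMod 2).val = 1 from rfl]
        rw [h2, ← map_list_prod ((Algebra.adjoin ℂ (Set.range S)).val)]
        rw [List.prod_ofFn]
        rw [Finset.prod_ite_mem, Finset.univ_inter]
        rfl
      rw [hEq]
      exact htr y hy0
  -- expand the product
  rw [hcoe, List.prod_ofFn]
  have hsm : (∏ i, u i : Algebra.adjoin ℂ (Set.range S))
      = algebraMap ℂ _ ((2:ℂ)⁻¹ ^ m) * ∏ i, (1 + ε i • S' i) := by
    rw [hu]
    simp_rw [Algebra.smul_def]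
    rw [Finset.prod_mul_distrib, Finset.prod_const, ← map_pow, Finset.card_univ,
      Fintype.card_fin]
  have hexp : (∏ i, (1 + ε i • S' i) : Algebra.adjoin ℂ (Set.range S))
      = ∑ t ∈ Finset.univ.powerset,
          algebraMap ℂ _ (∏ i ∈ t, ε i) * ∏ i ∈ t, S' i := by
    have h3 : ∀ i : Fin m, (1 + ε i • S' i : Algebra.adjoin ℂ (Set.range S))
        = ε i • S' i + 1 := fun i => add_comm _ _
    simp_rw [h3, Finset.prod_add, Finset.prod_const_one, mul_one]
    congr 1
    funext t
    simp_rw [Algebra.smul_def]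
    rw [Finset.prod_mul_distrib, map_prod]
  have hfinal : (∏ i, u i : Algebra.adjoin ℂ (Set.range S))
      = ∑ t ∈ Finset.univ.powerset,
          ((2:ℂ)⁻¹ ^ m * ∏ i ∈ t, ε i) • (∏ i ∈ t, S' i) := by
    rw [hsm, hexp, Finset.mul_sum]
    refine Finset.sum_congr rfl fun t _ => ?_
    rw [Algebra.smul_def, _root_.map_mul, mul_assoc]
  rw [hfinal]
  have hcoe2 : ((∑ t ∈ Finset.univ.powerset,
        ((2:ℂ)⁻¹ ^ m * ∏ i ∈ t, ε i) • (∏ i ∈ t, S' i) :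
        Algebra.adjoin ℂ (Set.range S)) : Matrix N N ℂ)
      = ∑ t ∈ Finset.univ.powerset,
          ((2:ℂ)⁻¹ ^ m * ∏ i ∈ t, ε i) • ((∏ i ∈ t, S' i : Algebra.adjoin ℂ (Set.range S)) : Matrix N N ℂ) := by
    rw [AddSubmonoidClass.coe_finset_sum]
    exact Finset.sum_congr rfl fun t _ => rfl
  rw [hcoe2, Matrix.trace_sum]
  rw [Finset.sum_eq_single_of_mem ∅ (Finset.empty_mem_powerset _)]
  · rw [Matrix.trace_smul, htrace_subset ∅, if_pos rfl]
    simp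
  · intro t _ ht
    rw [Matrix.trace_smul, htrace_subset t, if_neg ht, smul_zero]


lemma mul_prod_eps {m : ℕ} (S : Fin m → Matrix N N ℂ)
    (hcomm : ∀ i j, S i * S j = S j * S i)
    (hinv : ∀ i, S i * S i = 1)
    (ε : Fin m → ℂ) (hε : ∀ i, ε i * ε i = 1) (j : Fin m) :
    S j * (List.ofFn fun i => (2:ℂ)⁻¹ • (1 + ε i • S i)).prod
      = ε j • (List.ofFn fun i => (2:ℂ)⁻¹ • (1 + ε i • S i)).prod := by
  letI : CommRing (Algebra.adjoin ℂ (Set.range S)) :=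
    Algebra.adjoinCommRingOfComm ℂ (range_comm S hcomm)
  set S' : Fin m → Algebra.adjoin ℂ (Set.range S) :=
    fun i => ⟨S i, Algebra.subset_adjoin ⟨i, rfl⟩⟩ with hS'
  set u : Fin m → Algebra.adjoin ℂ (Set.range S) :=
    fun i => (2:ℂ)⁻¹ • (1 + ε i • S' i) with hu
  have hcoe : (List.ofFn fun i => (2:ℂ)⁻¹ • (1 + ε i • S i)).prod
      = ((∏ i, u i : Algebra.adjoin ℂ (Set.range S)) : Matrix N N ℂ) := by
    have h1 : (List.ofFn fun i => (2:ℂ)⁻¹ • (1 + ε i • S i))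
        = (List.ofFn u).map (Subalgebra.val _) := by
      rw [List.map_ofFn]; rfl
    rw [h1, ← List.prod_ofFn]
    exact (map_list_prod ((Algebra.adjoin ℂ (Set.range S)).val) (List.ofFn u)).symm
  have hS'inv : S' j * S' j = 1 := Subtype.ext (hinv j)
  have he : algebraMap ℂ (Algebra.adjoin ℂ (Set.range S)) (ε j)
      * algebraMap ℂ (Algebra.adjoin ℂ (Set.range S)) (ε j) = 1 := by
    rw [← _root_.map_mul, hε j, _root_.map_one]
  have key : S' j * u j = ε j • u j := by
    rw [hu]
    simp only [Algebra.smul_def]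
    linear_combination (algebraMap ℂ (Algebra.adjoin ℂ (Set.range S)) ((2:ℂ)⁻¹)
        * algebraMap ℂ (Algebra.adjoin ℂ (Set.range S)) (ε j)) * hS'inv
      - (algebraMap ℂ (Algebra.adjoin ℂ (Set.range S)) ((2:ℂ)⁻¹) * S' j) * he
  have hR : S' j * ∏ i, u i = ε j • ∏ i, u i := by
    rw [← Finset.mul_prod_erase Finset.univ u (Finset.mem_univ j), ← mul_assoc, key,
      smul_mul_assoc]
  rw [hcoe]
  calc S j * ↑(∏ i, u i)
      = ((S' j * ∏ i, u i : Algebra.adjoin ℂ (Set.range S)) : Matrix N N ℂ) := rfl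
    _ = ((ε j • ∏ i, u i : Algebra.adjoin ℂ (Set.range S)) : Matrix N N ℂ) := by rw [hR]
    _ = ε j • (↑(∏ i, u i) : Matrix N N ℂ) := rfl

lemma prod_orth {m : ℕ} (S : Fin m → Matrix N N ℂ)
    (hcomm : ∀ i j, S i * S j = S j * S i)
    (hinv : ∀ i, S i * S i = 1)
    (ε δ : Fin m → ℂ) (j : Fin m) (hj : ε j = 1) (hj' : δ j = -1) :
    (List.ofFn fun i => (2:ℂ)⁻¹ • (1 + ε i • S i)).prod
      * (List.ofFn fun i => (2:ℂ)⁻¹ • (1 + δ i • S i)).prod = 0 := by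
  letI : CommRing (Algebra.adjoin ℂ (Set.range S)) :=
    Algebra.adjoinCommRingOfComm ℂ (range_comm S hcomm)
  set S' : Fin m → Algebra.adjoin ℂ (Set.range S) :=
    fun i => ⟨S i, Algebra.subset_adjoin ⟨i, rfl⟩⟩ with hS'
  set u : Fin m → Algebra.adjoin ℂ (Set.range S) :=
    fun i => (2:ℂ)⁻¹ • (1 + ε i • S' i) with hu
  set v : Fin m → Algebra.adjoin ℂ (Set.range S) :=
    fun i => (2:ℂ)⁻¹ • (1 + δ i • S' i) with hv
  have hcoe : (List.ofFn fun i => (2:ℂ)⁻¹ • (1 + ε i • S i)).prod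
      = ((∏ i, u i : Algebra.adjoin ℂ (Set.range S)) : Matrix N N ℂ) := by
    have h1 : (List.ofFn fun i => (2:ℂ)⁻¹ • (1 + ε i • S i))
        = (List.ofFn u).map (Subalgebra.val _) := by
      rw [List.map_ofFn]; rfl
    rw [h1, ← List.prod_ofFn]
    exact (map_list_prod ((Algebra.adjoin ℂ (Set.range S)).val) (List.ofFn u)).symm
  have hcoe' : (List.ofFn fun i => (2:ℂ)⁻¹ • (1 + δ i • S i)).prod
      = ((∏ i, v i : Algebra.adjoin ℂ (Set.range S)) : Matrix N N ℂ) := by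
    have h1 : (List.ofFn fun i => (2:ℂ)⁻¹ • (1 + δ i • S i))
        = (List.ofFn v).map (Subalgebra.val _) := by
      rw [List.map_ofFn]; rfl
    rw [h1, ← List.prod_ofFn]
    exact (map_list_prod ((Algebra.adjoin ℂ (Set.range S)).val) (List.ofFn v)).symm
  have hS'inv : S' j * S' j = 1 := Subtype.ext (hinv j)
  have hzero : u j * v j = 0 := by
    rw [hu, hv]
    simp only [hj, hj', Algebra.smul_def, map_neg, _root_.map_one, one_mul, neg_mul, neg_one_mul]
    linear_combination (-(algebraMap ℂ (Algebra.adjoin ℂ (Set.range S)) ((2:ℂ)⁻¹)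
        * algebraMap ℂ (Algebra.adjoin ℂ (Set.range S)) ((2:ℂ)⁻¹))) * hS'inv
  have hR : (∏ i, u i) * (∏ i, v i) = 0 := by
    rw [← Finset.prod_mul_distrib]
    exact Finset.prod_eq_zero (Finset.mem_univ j) hzero
  rw [hcoe, hcoe']
  calc (↑(∏ i, u i) : Matrix N N ℂ) * ↑(∏ i, v i)
      = (((∏ i, u i) * (∏ i, v i) : Algebra.adjoin ℂ (Set.range S)) : Matrix N N ℂ) := rfl
    _ = 0 := by rw [hR]; rfl


lemma hub_lemma {m : ℕ} (S : Fin m → Matrix N N ℂ)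
    (hcomm : ∀ i j, S i * S j = S j * S i)
    (hherm : ∀ i, (S i).IsHermitian)
    (hinv : ∀ i, S i * S i = 1)
    (μ : Fin m → ℝ) (hμ1 : ∑ i, μ i = 1)
    (c₀ : ℝ) (hc₀ : ∀ i, c₀ ≤ μ i) (hc₀0 : 0 ≤ c₀) (hc₀1 : c₀ ≤ 1)
    (Pi Ω : Matrix N N ℂ)
    (hPi : Pi = (List.ofFn fun i => (2:ℂ)⁻¹ • (1 + S i)).prod)
    (hΩ : Ω = ∑ i, (μ i : ℂ) • ((2 : ℂ)⁻¹ • (S i + 1)))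
    (x : N → ℂ) :
    (star x ⬝ᵥ (((1 - Pi) * Ω * (1 - Pi)) *ᵥ x)).re ≤ (1 - c₀) * (star x ⬝ᵥ x).re := by
  set P : Fin m → Matrix N N ℂ := fun i => (2:ℂ)⁻¹ • (1 + S i) with hPdef
  have hPherm : ∀ i, (P i)ᴴ = P i := by
    intro i
    rw [hPdef]
    simp only [Matrix.conjTranspose_smul, Matrix.conjTranspose_add, Matrix.conjTranspose_one,
      (hherm i).eq]
    norm_num
  have hPidem : ∀ i, P i * P i = P i := by
    intro i
    rw [hPdef]
    simp only
    have hsq : ((1 : Matrix N N ℂ) + S i) * (1 + S i) = (1 + S i) + (1 + S i) := by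
      rw [mul_add, mul_one, add_mul, one_mul, hinv i]
      abel
    rw [smul_mul_smul_comm, hsq]
    module
  have hPcomm : ∀ i j, P i * P j = P j * P i := by
    intro i j
    have h1 : Commute (1 + S i) (S j) := Commute.add_left (Commute.one_left _) (hcomm i j)
    have h2 : Commute (1 + S i) (1 + S j) := Commute.add_right (Commute.one_right _) h1
    exact (h2.smul_left ((2:ℂ)⁻¹)).smul_right ((2:ℂ)⁻¹)
  obtain ⟨hPiH, hPi2, hubL⟩ := list_facts (List.ofFn P)
    (fun A hA => by obtain ⟨i, rfl⟩ := List.mem_ofFn.mp hA; exact hPherm i)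
    (fun A hA => by obtain ⟨i, rfl⟩ := List.mem_ofFn.mp hA; exact hPidem i)
    (fun A hA B hB => by
      obtain ⟨i, rfl⟩ := List.mem_ofFn.mp hA
      obtain ⟨j, rfl⟩ := List.mem_ofFn.mp hB
      exact hPcomm i j)
  rw [← hPi] at hPiH hPi2 hubL
  have hQH : (1 - Pi)ᴴ = 1 - Pi := by
    rw [Matrix.conjTranspose_sub, Matrix.conjTranspose_one, hPiH]
  have hQ2 : (1 - Pi) * (1 - Pi) = 1 - Pi := by
    simp only [sub_mul, mul_sub, one_mul, mul_one, hPi2]; abel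
  set y : N → ℂ := (1 - Pi) *ᵥ x with hy
  have step1 : star x ⬝ᵥ (((1 - Pi) * Ω * (1 - Pi)) *ᵥ x) = star y ⬝ᵥ (Ω *ᵥ y) := by
    rw [mul_assoc, herm_shift _ _ hQH, ← Matrix.mulVec_mulVec]
  have step2 : Pi *ᵥ y = 0 := by
    rw [hy, Matrix.mulVec_mulVec]
    have : Pi * (1 - Pi) = 0 := by rw [mul_sub, mul_one, hPi2, sub_self]
    rw [this, Matrix.zero_mulVec]
  have hQy : (1 - Pi) *ᵥ y = y := by
    rw [Matrix.sub_mulVec, Matrix.one_mulVec, step2, sub_zero]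
  set q1y : ℝ := (star y ⬝ᵥ y).re with hq1y
  set e : Fin m → ℝ := fun i => (star y ⬝ᵥ ((1 - P i) *ᵥ y)).re with he
  have hQPH : ∀ i, (1 - P i)ᴴ = 1 - P i := fun i => by
    rw [Matrix.conjTranspose_sub, Matrix.conjTranspose_one, hPherm i]
  have hQP2 : ∀ i, (1 - P i) * (1 - P i) = 1 - P i := fun i => by
    simp only [sub_mul, mul_sub, one_mul, mul_one, hPidem i]; abel
  have he0 : ∀ i, 0 ≤ e i := fun i => proj_nonneg (hQPH i) (hQP2 i) y
  have hqP : ∀ i, (star y ⬝ᵥ (P i *ᵥ y)).re = q1y - e i := by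
    intro i
    rw [he]
    simp only
    rw [Matrix.sub_mulVec, Matrix.one_mulVec, dotProduct_sub, Complex.sub_re, hq1y]
    ring
  have hΩy : (star y ⬝ᵥ (Ω *ᵥ y)).re = ∑ i, μ i * (q1y - e i) := by
    have hΩ' : Ω = ∑ i, (μ i : ℂ) • P i := by
      rw [hΩ]
      exact Finset.sum_congr rfl fun i _ => by rw [hPdef, add_comm (S i) 1]
    have φadd : ∀ A B : Matrix N N ℂ,
        star y ⬝ᵥ ((A + B) *ᵥ y) = star y ⬝ᵥ (A *ᵥ y) + star y ⬝ᵥ (B *ᵥ y) := by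
      intro A B; rw [Matrix.add_mulVec, dotProduct_add]
    have hsum : star y ⬝ᵥ (Ω *ᵥ y) = ∑ i, star y ⬝ᵥ (((μ i : ℂ) • P i) *ᵥ y) := by
      rw [hΩ']
      exact map_sum (AddMonoidHom.mk' (fun A => star y ⬝ᵥ (A *ᵥ y)) φadd) _ _
    rw [hsum, Complex.re_sum]
    refine Finset.sum_congr rfl fun i _ => ?_
    rw [Matrix.smul_mulVec, dotProduct_smul, smul_eq_mul]
    rw [← hqP i]
    simp [Complex.mul_re]
  have hsumeq : ∑ i, μ i * (q1y - e i) = q1y - ∑ i, μ i * e i := by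
    simp only [mul_sub]
    rw [Finset.sum_sub_distrib, ← Finset.sum_mul, hμ1, one_mul]
  have hμe : c₀ * ∑ i, e i ≤ ∑ i, μ i * e i := by
    rw [Finset.mul_sum]
    exact Finset.sum_le_sum fun i _ => mul_le_mul_of_nonneg_right (hc₀ i) (he0 i)
  have hee : q1y ≤ ∑ i, e i := by
    have h := hubL y
    rw [hQy] at h
    have hrhs : ((List.ofFn P).map fun A => (star y ⬝ᵥ ((1 - A) *ᵥ y)).re).sum
        = ∑ i, e i := by
      rw [List.map_ofFn]
      exact Fin.sum_ofFn _
    rw [hrhs] at h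
    exact h
  have hq1yx : q1y ≤ (star x ⬝ᵥ x).re := by
    have h := herm_shift (1 - Pi) (1 - Pi) hQH x x
    rw [hQ2] at h
    calc q1y = (star x ⬝ᵥ ((1 - Pi) *ᵥ x)).re := by rw [hq1y, hy, h]
      _ ≤ (star x ⬝ᵥ x).re := proj_le_self hQH hQ2 x
  have h1 : c₀ * q1y ≤ c₀ * ∑ i, e i := by
    have : 0 ≤ q1y := dot_self_re_nonneg y
    exact mul_le_mul_of_nonneg_left hee hc₀0
  have h2 : (1 - c₀) * q1y ≤ (1 - c₀) * (star x ⬝ᵥ x).re :=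
    mul_le_mul_of_nonneg_left hq1yx (by linarith)
  rw [step1, hΩy, hsumeq]
  nlinarith [hμe, h1, h2]

end StabProof

open StabProof Matrix

/-- For any probability distribution `μ` on the independent generators
`S₁,…,S_{n−k}` of the stabilizer group of an `[[n,k,d]]` code with `k ≥ 1`, the
verification operator `Ω_μ = ∑ᵢ μᵢ(Sᵢ+1)/2` satisfies
`λ_max((1−Π)Ω_μ(1−Π)) = 1 − minᵢ μᵢ ≥ 1 − 1/(n−k)`, with equality iff `μ` is uniform. -/
theorem stabilizer_generator_uniform_sampling_optimal {n k : ℕ}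
    (hk1 : 1 ≤ k) (hkn : k < n)
    (S : Fin (n - k) → Matrix (Fin (2 ^ n)) (Fin (2 ^ n)) ℂ)
    (hcomm : ∀ i j, S i * S j = S j * S i)
    (hherm : ∀ i, (S i).IsHermitian)
    (hinv : ∀ i, S i * S i = 1)
    (htr : ∀ y : Fin (n - k) → ZMod 2, y ≠ 0 →
      (List.ofFn fun i => S i ^ (y i).val).prod.trace = 0)
    (μ : Fin (n - k) → ℝ) (hμ0 : ∀ i, 0 ≤ μ i) (hμ1 : ∑ i, μ i = 1)
    (Pi Ω : Matrix (Fin (2 ^ n)) (Fin (2 ^ n)) ℂ)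
    (hPi : Pi = (List.ofFn fun i => (2 : ℂ)⁻¹ • (1 + S i)).prod)
    (hΩ : Ω = ∑ i, (μ i : ℂ) • ((2 : ℂ)⁻¹ • (S i + 1)))
    (hherm' : ((1 - Pi) * Ω * (1 - Pi)).IsHermitian) :
    (⨆ i, hherm'.eigenvalues i) = 1 - ⨅ i, μ i ∧
      1 - 1 / ((n - k : ℕ) : ℝ) ≤ 1 - ⨅ i, μ i ∧
      (1 - ⨅ i, μ i = 1 - 1 / ((n - k : ℕ) : ℝ) ↔ ∀ i, μ i = 1 / ((n - k : ℕ) : ℝ)) := by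
  have hm : 0 < n - k := Nat.sub_pos_of_lt hkn
  haveI : Nonempty (Fin (n - k)) := ⟨⟨0, hm⟩⟩
  obtain ⟨i₀, hi₀⟩ := Finite.exists_min μ
  have hinf : (⨅ i, μ i) = μ i₀ :=
    le_antisymm (ciInf_le (Set.finite_range μ).bddBelow i₀) (le_ciInf hi₀)
  have hmpos : (0:ℝ) < ((n - k : ℕ) : ℝ) := by exact_mod_cast hm
  have hcard : (Finset.univ : Finset (Fin (n - k))).card = n - k := by simp
  have hsum_const : ((n - k : ℕ) : ℝ) * μ i₀ ≤ 1 := by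
    calc ((n - k : ℕ) : ℝ) * μ i₀ = ∑ _i : Fin (n - k), μ i₀ := by
          rw [Finset.sum_const, hcard, nsmul_eq_mul]
      _ ≤ ∑ i, μ i := Finset.sum_le_sum fun i _ => hi₀ i
      _ = 1 := hμ1
  have hμle : μ i₀ ≤ 1 / ((n - k : ℕ) : ℝ) := by
    rw [le_div_iff₀ hmpos, mul_comm]; exact hsum_const
  have hμi₀le1 : μ i₀ ≤ 1 := by
    have := Finset.single_le_sum (fun i _ => hμ0 i) (Finset.mem_univ i₀)
    rw [hμ1] at this; exact this
  -- Parts 2 and 3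
  have part2 : 1 - 1 / ((n - k : ℕ) : ℝ) ≤ 1 - ⨅ i, μ i := by
    rw [hinf]; linarith
  have part3 : (1 - ⨅ i, μ i = 1 - 1 / ((n - k : ℕ) : ℝ)
      ↔ ∀ i, μ i = 1 / ((n - k : ℕ) : ℝ)) := by
    rw [hinf]
    constructor
    · intro h
      have hmin : μ i₀ = 1 / ((n - k : ℕ) : ℝ) := by linarith
      intro i
      have hsum0 : ∑ j, (μ j - μ i₀) = 0 := by
        rw [Finset.sum_sub_distrib, hμ1, Finset.sum_const, hcard, nsmul_eq_mul, hmin]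
        field_simp
        ring
      have := (Finset.sum_eq_zero_iff_of_nonneg
        (fun j _ => sub_nonneg.2 (hi₀ j))).mp hsum0 i (Finset.mem_univ i)
      have : μ i = μ i₀ := by linarith
      rw [this, hmin]
    · intro h
      rw [h i₀]
  -- Part 1 : the eigenvalue computation
  -- the eigenvector
  set ε : Fin (n - k) → ℂ := fun i => if i = i₀ then -1 else 1 with hε_def
  have hε : ∀ i, ε i * ε i = 1 := by
    intro i; by_cases h : i = i₀ <;> simp [hε_def, h]
  set T : Matrix (Fin (2 ^ n)) (Fin (2 ^ n)) ℂ :=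
    (List.ofFn fun i => (2:ℂ)⁻¹ • (1 + ε i • S i)).prod with hT
  have htrT : T.trace = (2:ℂ)⁻¹ ^ (n - k) * (Fintype.card (Fin (2 ^ n))) :=
    trace_eps S hcomm htr ε
  have htrT0 : T.trace ≠ 0 := by
    rw [htrT]
    apply mul_ne_zero
    · exact pow_ne_zero _ (by norm_num)
    · exact Nat.cast_ne_zero.mpr Fintype.card_ne_zero
  have hTne : T ≠ 0 := by
    intro h; rw [h] at htrT0; simp at htrT0
  have hex : ∃ r c, T r c ≠ 0 := by
    by_contra h
    push_neg at h
    exact hTne (Matrix.ext fun r c => h r c)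
  obtain ⟨r₀, c₀, hrc⟩ := hex
  set v : Fin (2 ^ n) → ℂ := fun r => T r c₀ with hvdef
  have hv0 : v ≠ 0 := fun h => hrc (congrFun h r₀)
  have hSv : ∀ j, S j *ᵥ v = ε j • v := by
    intro j
    have h := mul_prod_eps S hcomm hinv ε hε j
    calc S j *ᵥ v = fun r => (S j * T) r c₀ := rfl
      _ = fun r => (ε j • T) r c₀ := by rw [hT, h]
      _ = ε j • v := rfl
  have hPiT : Pi * T = 0 := by
    rw [hPi]
    have h1 : (List.ofFn fun i => (2:ℂ)⁻¹ • (1 + S i))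
        = (List.ofFn fun i => (2:ℂ)⁻¹ • (1 + (fun _ : Fin (n-k) => (1:ℂ)) i • S i)) := by
      simp
    rw [h1, hT]
    exact prod_orth S hcomm hinv _ ε i₀ rfl (by simp [hε_def])
  have hPiv : Pi *ᵥ v = 0 := by
    calc Pi *ᵥ v = fun r => (Pi * T) r c₀ := rfl
      _ = fun r => (0 : Matrix (Fin (2^n)) (Fin (2^n)) ℂ) r c₀ := by rw [hPiT]
      _ = 0 := rfl
  have hQv : (1 - Pi) *ᵥ v = v := by
    rw [Matrix.sub_mulVec, Matrix.one_mulVec, hPiv, sub_zero]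
  have hΩv : Ω *ᵥ v = ((1:ℂ) - (μ i₀ : ℂ)) • v := by
    rw [hΩ]
    have φ : ∀ (A B : Matrix (Fin (2^n)) (Fin (2^n)) ℂ), (A + B) *ᵥ v = A *ᵥ v + B *ᵥ v :=
      fun A B => Matrix.add_mulVec A B v
    have hsum : (∑ i, (μ i : ℂ) • ((2 : ℂ)⁻¹ • (S i + 1))) *ᵥ v
        = ∑ i, ((μ i : ℂ) • ((2 : ℂ)⁻¹ • (S i + 1))) *ᵥ v := by
      exact map_sum (AddMonoidHom.mk' (fun A => A *ᵥ v) φ) _ _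
    rw [hsum]
    have hterm : ∀ i, ((μ i : ℂ) • ((2 : ℂ)⁻¹ • (S i + 1))) *ᵥ v
        = ((μ i : ℂ) * (2:ℂ)⁻¹ * (ε i + 1)) • v := by
      intro i
      rw [Matrix.smul_mulVec, Matrix.smul_mulVec, Matrix.add_mulVec,
        Matrix.one_mulVec, hSv i]
      module
    simp_rw [hterm, ← Finset.sum_smul]
    congr 1
    have hsplit : ∀ i, (μ i : ℂ) * (2:ℂ)⁻¹ * (ε i + 1)
        = (μ i : ℂ) - (if i = i₀ then (μ i₀ : ℂ) else 0) := by
      intro i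
      by_cases h : i = i₀ <;> simp [hε_def, h] <;> ring
    simp_rw [hsplit, Finset.sum_sub_distrib, Finset.sum_ite_eq' Finset.univ i₀]
    simp
    rw [← Complex.ofReal_sum, hμ1, Complex.ofReal_one]
  have hMv : ((1 - Pi) * Ω * (1 - Pi)) *ᵥ v = ((1:ℂ) - (μ i₀ : ℂ)) • v := by
    rw [← Matrix.mulVec_mulVec, hQv, ← Matrix.mulVec_mulVec, hΩv, Matrix.mulVec_smul, hQv]
  -- membership in the spectrum
  have hspec : (1 - μ i₀ : ℝ) ∈ spectrum ℝ ((1 - Pi) * Ω * (1 - Pi)) := by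
    rw [spectrum.mem_iff]
    intro hUnit
    have hdet := (Matrix.isUnit_iff_isUnit_det _).mp hUnit
    have hker : (algebraMap ℝ (Matrix (Fin (2^n)) (Fin (2^n)) ℂ) (1 - μ i₀)
        - ((1 - Pi) * Ω * (1 - Pi))) *ᵥ v = 0 := by
      rw [Matrix.sub_mulVec, hMv, Algebra.algebraMap_eq_smul_one,
        Matrix.smul_mulVec, Matrix.one_mulVec]
      have : ((1 - μ i₀ : ℝ)) • v = ((1:ℂ) - (μ i₀:ℂ)) • v := by
        rw [← Complex.coe_smul]
        push_cast
        ring_nf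
      rw [this, sub_self]
    have := Matrix.exists_mulVec_eq_zero_iff.mp ⟨v, hv0, hker⟩
    rw [this] at hdet
    simp at hdet
  have hrange : (1 - μ i₀ : ℝ) ∈ Set.range hherm'.eigenvalues := by
    rw [← Matrix.IsHermitian.spectrum_real_eq_range_eigenvalues hherm']
    exact hspec
  obtain ⟨j₀, hj₀⟩ := hrange
  -- upper bound on the quadratic form
  have hub : ∀ x : Fin (2 ^ n) → ℂ,
      (star x ⬝ᵥ (((1 - Pi) * Ω * (1 - Pi)) *ᵥ x)).re ≤ (1 - μ i₀) * (star x ⬝ᵥ x).re :=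
    fun x => hub_lemma S hcomm hherm hinv μ hμ1 (μ i₀) hi₀ (hμ0 i₀) hμi₀le1 Pi Ω hPi hΩ x
  -- each eigenvalue is at most 1 - μ i₀
  have hev : ∀ j, hherm'.eigenvalues j ≤ 1 - μ i₀ := by
    intro j
    have hmul := hherm'.mulVec_eigenvectorBasis j
    have hnorm : ‖hherm'.eigenvectorBasis j‖ = 1 := hherm'.eigenvectorBasis.orthonormal.1 j
    have h5 : (inner ℂ (hherm'.eigenvectorBasis j) (hherm'.eigenvectorBasis j) : ℂ) = 1 := by
      rw [inner_self_eq_norm_sq_to_K, hnorm]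
      norm_num
    set w : Fin (2 ^ n) → ℂ := ⇑(hherm'.eigenvectorBasis j) with hwdef
    have hq1c : star w ⬝ᵥ w = 1 := by
      have h6 := EuclideanSpace.inner_eq_star_dotProduct (𝕜 := ℂ)
        (hherm'.eigenvectorBasis j) (hherm'.eigenvectorBasis j)
      rw [h5, dotProduct_comm] at h6
      exact h6.symm
    have hq1 : (star w ⬝ᵥ w).re = 1 := by rw [hq1c]; simp
    have hqform : (star w ⬝ᵥ (((1 - Pi) * Ω * (1 - Pi)) *ᵥ w)).re = hherm'.eigenvalues j := by
      rw [hmul]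
      have h4 : star w ⬝ᵥ (hherm'.eigenvalues j • w) = hherm'.eigenvalues j • (star w ⬝ᵥ w) :=
        dotProduct_smul _ _ _
      rw [h4, hq1c, Complex.smul_re]
      simp
    have := hub w
    rw [hqform, hq1, mul_one] at this
    exact this
  have part1 : (⨆ j, hherm'.eigenvalues j) = 1 - μ i₀ :=
    le_antisymm (ciSup_le hev) (hj₀ ▸ le_ciSup (Set.finite_range _).bddAbove j₀)
  rw [hinf]
  exact ⟨part1, hinf ▸ part2, hinf ▸ part3⟩
end

section
/- For a CSS code with full-rank check matrices H_X, H_Z (H_X H_Z^T = 0, k_X + k_Z < n) and code-space projector Π_CSS, the XZ verification operator Ω = (1/2)[M_X + M_Z], where M_X = ∏_{c_X}(I+X^{c_X})/2 and M_Z = ∏_{c_Z}(I+Z^{c_Z})/2, has λ_max((I−Π_CSS)Ω(I−Π_CSS)) = 1/2; hence its spectral gap is 1/2, independent of n and k. -/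
open Matrix


/-- The `n`-qubit Pauli operator `X^c = ⊗ᵢ X^{cᵢ}`: `X^c |t⟩ = |t + c⟩`. -/
def Xop {n : ℕ} (c : Fin n → ZMod 2) :
    Matrix (Fin n → ZMod 2) (Fin n → ZMod 2) ℂ :=
  Matrix.of fun s t => if s = t + c then 1 else 0

/-- The `n`-qubit Pauli operator `Z^c = ⊗ᵢ Z^{cᵢ}`: `Z^c |t⟩ = (−1)^{c·t} |t⟩`. -/
def Zop {n : ℕ} (c : Fin n → ZMod 2) :
    Matrix (Fin n → ZMod 2) (Fin n → ZMod 2) ℂ :=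
  Matrix.of fun s t => if s = t then (-1 : ℂ) ^ (∑ i, (c i * t i).val) else 0

lemma neg_one_pow_congr_mod2 {a b : ℕ} (h : a % 2 = b % 2) : ((-1 : ℂ)) ^ a = (-1) ^ b := by
  conv_lhs => rw [← Nat.div_add_mod a 2, pow_add, pow_mul, neg_one_sq, one_pow, one_mul]
  conv_rhs => rw [← Nat.div_add_mod b 2, pow_add, pow_mul, neg_one_sq, one_pow, one_mul]
  rw [h]

lemma val_mod : ∀ x y : ZMod 2, (x + y).val % 2 = (x.val + y.val) % 2 := by decide

lemma sum_mod_congr {n : ℕ} (f g : Fin n → ℕ) (h : ∀ i, f i % 2 = g i % 2) :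
    (∑ i, f i) % 2 = (∑ i, g i) % 2 := by
  conv_lhs => rw [Finset.sum_nat_mod]
  conv_rhs => rw [Finset.sum_nat_mod]
  congr 1
  exact Finset.sum_congr rfl fun i _ => h i

lemma self_add_self {n : ℕ} (u : Fin n → ZMod 2) : u + u = 0 := by
  funext i
  change u i + u i = 0
  revert i
  have : ∀ x : ZMod 2, x + x = 0 := by decide
  exact fun i => this _

lemma Xop_zero {n : ℕ} : (Xop (0 : Fin n → ZMod 2)) = 1 := by
  ext s t
  simp [Xop, Matrix.one_apply]

lemma Xop_mul {n : ℕ} (c d : Fin n → ZMod 2) : Xop c * Xop d = Xop (c + d) := by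
  ext s t
  simp only [Xop, Matrix.mul_apply, Matrix.of_apply, ite_mul, one_mul, zero_mul]
  rw [Finset.sum_eq_single (t + d)]
  · have e : t + d + c = t + (c + d) := by ring
    rw [e]
    simp
  · intro u _ hu
    simp [hu]
  · simp

lemma Xop_sq {n : ℕ} (c : Fin n → ZMod 2) : Xop c * Xop c = 1 := by
  rw [Xop_mul, self_add_self, Xop_zero]

lemma Zop_zero {n : ℕ} : (Zop (0 : Fin n → ZMod 2)) = 1 := by
  ext s t
  simp [Zop, Matrix.one_apply]

lemma Zop_mul {n : ℕ} (c d : Fin n → ZMod 2) : Zop c * Zop d = Zop (c + d) := by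
  ext s t
  simp only [Zop, Matrix.mul_apply, Matrix.of_apply]
  rw [Finset.sum_eq_single t]
  · by_cases h : s = t
    · simp only [h, if_true, ← pow_add]
      refine neg_one_pow_congr_mod2 ?_
      rw [← Finset.sum_add_distrib]
      refine sum_mod_congr _ _ fun i => ?_
      rw [Pi.add_apply, add_mul, val_mod]
    · simp [h]
  · intro u _ hu
    simp [hu]
  · simp

lemma Zop_sq {n : ℕ} (c : Fin n → ZMod 2) : Zop c * Zop c = 1 := by
  rw [Zop_mul, self_add_self, Zop_zero]

lemma XZ_comm {n : ℕ} (c d : Fin n → ZMod 2) (h : ∑ i, d i * c i = 0) :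
    Commute (Xop c) (Zop d) := by
  have hpar : (∑ i, (d i * c i).val) % 2 = 0 := by
    have h2 : ((∑ i, (d i * c i).val : ℕ) : ZMod 2) = 0 := by
      push_cast
      simpa [ZMod.natCast_val, ZMod.cast_id] using h
    rwa [ZMod.natCast_eq_zero_iff, Nat.dvd_iff_mod_eq_zero] at h2
  show Xop c * Zop d = Zop d * Xop c
  ext s t
  have key : (∑ i, (d i * (t i + c i)).val) % 2 = (∑ i, (d i * t i).val) % 2 := by
    have k1 : (∑ i, (d i * (t i + c i)).val) % 2
        = (∑ i, ((d i * t i).val + (d i * c i).val)) % 2 :=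
      sum_mod_congr _ _ fun i => by rw [mul_add, val_mod]
    rw [k1, Finset.sum_add_distrib, Nat.add_mod, hpar, Nat.add_zero,
      Nat.mod_mod_of_dvd _ (dvd_refl 2)]
  simp only [Matrix.mul_apply, Xop, Zop, Matrix.of_apply]
  rw [Finset.sum_eq_single t (by intro u _ hu; simp [hu]) (by simp),
    Finset.sum_eq_single (t + c) (by intro u _ hu; simp [hu]) (by simp)]
  by_cases hst : s = t + c
  · simp only [hst, eq_self_iff_true, if_true, Pi.add_apply, one_mul, mul_one]
    exact neg_one_pow_congr_mod2 key.symm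
  · simp [hst]

section ListLemmas
variable {M : Type*} [Monoid M]

lemma list_prod_absorb_left {l : List M} (hcomm : ∀ x ∈ l, ∀ y ∈ l, Commute x y)
    (hid : ∀ x ∈ l, x * x = x) {x : M} (hx : x ∈ l) : x * l.prod = l.prod := by
  induction l with
  | nil => simp at hx
  | cons a l ih =>
    rw [List.prod_cons]
    rcases List.mem_cons.1 hx with rfl | hx
    · rw [← mul_assoc, hid x (List.mem_cons_self)]
    · have hca : Commute x a :=
        hcomm x (List.mem_cons_of_mem _ hx) a (List.mem_cons_self)
      rw [← mul_assoc, hca.eq, mul_assoc,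
        ih (fun p hp q hq => hcomm p (List.mem_cons_of_mem _ hp) q (List.mem_cons_of_mem _ hq))
          (fun p hp => hid p (List.mem_cons_of_mem _ hp)) hx]

lemma list_prod_absorb_right {l : List M} (hcomm : ∀ x ∈ l, ∀ y ∈ l, Commute x y)
    (hid : ∀ x ∈ l, x * x = x) {x : M} (hx : x ∈ l) : l.prod * x = l.prod := by
  have h : Commute x l.prod :=
    Commute.list_prod_right _ _ fun y hy => hcomm x hx y hy
  rw [← h.eq, list_prod_absorb_left hcomm hid hx]

lemma list_prod_idem {l : List M} (hcomm : ∀ x ∈ l, ∀ y ∈ l, Commute x y)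
    (hid : ∀ x ∈ l, x * x = x) : l.prod * l.prod = l.prod := by
  induction l with
  | nil => simp
  | cons a l ih =>
    have ha : a ∈ a :: l := List.mem_cons_self
    have hsub : ∀ x ∈ l, ∀ y ∈ l, Commute x y := fun p hp q hq =>
      hcomm p (List.mem_cons_of_mem _ hp) q (List.mem_cons_of_mem _ hq)
    have hidsub : ∀ x ∈ l, x * x = x := fun p hp => hid p (List.mem_cons_of_mem _ hp)
    have hc : Commute a l.prod :=
      Commute.list_prod_right _ _ fun y hy => hcomm a ha y (List.mem_cons_of_mem _ hy)
    rw [List.prod_cons, mul_assoc, ← mul_assoc l.prod a, ← hc.eq, mul_assoc, ih hsub hidsub,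
      ← mul_assoc, hid a ha]

end ListLemmas
section VecLemmas
variable {ι : Type*} [Fintype ι] [DecidableEq ι]

lemma list_prod_mulVec_fixed (l : List (Matrix ι ι ℂ)) (v : ι → ℂ)
    (h : ∀ f ∈ l, f *ᵥ v = v) : l.prod *ᵥ v = v := by
  induction l with
  | nil => simp
  | cons a l ih =>
    rw [List.prod_cons, ← Matrix.mulVec_mulVec,
      ih fun f hf => h f (List.mem_cons_of_mem _ hf), h a (List.mem_cons_self)]

lemma list_prod_vecMul_fixed (l : List (Matrix ι ι ℂ)) (v : ι → ℂ)
    (h : ∀ f ∈ l, v ᵥ* f = v) : v ᵥ* l.prod = v := by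
  induction l with
  | nil => simp
  | cons a l ih =>
    rw [List.prod_cons, ← Matrix.vecMul_vecMul, h a (List.mem_cons_self),
      ih fun f hf => h f (List.mem_cons_of_mem _ hf)]

end VecLemmas

lemma Xop_mulVec_single {n : ℕ} (c t : Fin n → ZMod 2) :
    Xop c *ᵥ Pi.single t 1 = Pi.single (t + c) 1 := by
  funext s
  simp only [Matrix.mulVec, dotProduct, Xop, Matrix.of_apply, ite_mul, one_mul, zero_mul]
  rw [Finset.sum_eq_single t (fun u _ hu => by simp [Pi.single_apply, hu]) (by simp)]
  simp [Pi.single_apply, eq_comm]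

lemma Zop_mulVec_single {n : ℕ} (c t : Fin n → ZMod 2) :
    Zop c *ᵥ Pi.single t 1
      = ((-1 : ℂ) ^ (∑ i, (c i * t i).val)) • (Pi.single t 1 : (Fin n → ZMod 2) → ℂ) := by
  funext s
  simp only [Matrix.mulVec, dotProduct, Zop, Matrix.of_apply, ite_mul, one_mul, zero_mul,
    Pi.smul_apply, smul_eq_mul]
  rw [Finset.sum_eq_single t (fun u _ hu => by simp [Pi.single_apply, hu]) (by simp)]
  by_cases hst : s = t
  · subst hst; simp
  · simp [Pi.single_apply, hst, Ne.symm hst]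

lemma ones_vecMul_Xop {n : ℕ} (c : Fin n → ZMod 2) :
    (fun _ => (1 : ℂ)) ᵥ* Xop c = fun _ => 1 := by
  funext t
  simp only [Matrix.vecMul, dotProduct, Xop, Matrix.of_apply, mul_ite, mul_one, mul_zero,
    one_mul]
  rw [Finset.sum_eq_single (t + c) (fun u _ hu => by simp [hu]) (by simp)]
  simp

lemma chi_vecMul_Xop {n : ℕ} (d c : Fin n → ZMod 2) :
    (fun s => ((-1 : ℂ) ^ (∑ i, (d i * s i).val))) ᵥ* Xop c
      = fun s => ((-1 : ℂ) ^ (∑ i, (d i * c i).val)) * (-1 : ℂ) ^ (∑ i, (d i * s i).val) := by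
  funext t
  simp only [Matrix.vecMul, dotProduct, Xop, Matrix.of_apply, mul_ite, mul_one, mul_zero]
  rw [Finset.sum_eq_single (t + c) (fun u _ hu => by simp [hu]) (by simp)]
  rw [if_pos rfl, ← pow_add]
  refine neg_one_pow_congr_mod2 ?_
  refine (sum_mod_congr _ (fun i => (d i * t i).val + (d i * c i).val) fun i => ?_).trans ?_
  · rw [Pi.add_apply, mul_add, val_mod]
  · rw [Finset.sum_add_distrib]
    omega
lemma vecMul_smulC {ι : Type*} [Fintype ι] (a : ℂ) (M : Matrix ι ι ℂ) (v : ι → ℂ) :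
    v ᵥ* (a • M) = a • (v ᵥ* M) := by
  funext j
  simp only [Matrix.vecMul, dotProduct, Matrix.smul_apply, smul_eq_mul, Pi.smul_apply,
    Finset.mul_sum]
  exact Finset.sum_congr rfl fun s _ => by ring

lemma proj_idem {ι : Type*} [Fintype ι] [DecidableEq ι] (P : Matrix ι ι ℂ) (hP : P * P = 1) :
    ((2 : ℂ)⁻¹ • (1 + P)) * ((2 : ℂ)⁻¹ • (1 + P)) = (2 : ℂ)⁻¹ • (1 + P) := by
  have h1 : (1 + P) * (1 + P) = (2 : ℂ) • (1 + P) := by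
    simp only [mul_add, add_mul, one_mul, mul_one]
    rw [hP, two_smul]
    abel
  rw [smul_mul_assoc, mul_smul_comm, smul_smul, h1, smul_smul]
  norm_num

lemma proj_comm {ι : Type*} [Fintype ι] [DecidableEq ι] (P Q : Matrix ι ι ℂ)
    (h : Commute P Q) :
    Commute ((2 : ℂ)⁻¹ • (1 + P)) ((2 : ℂ)⁻¹ • (1 + Q)) := by
  have h1 : (1 + P) * (1 + Q) = (1 + Q) * (1 + P) := by
    simp only [mul_add, add_mul, one_mul, mul_one]
    rw [h.eq]
    abel
  show _ = _
  rw [smul_mul_assoc, mul_smul_comm, smul_mul_assoc, mul_smul_comm, h1]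

lemma zmod2_ne_zero {x : ZMod 2} (h : x ≠ 0) : x = 1 := by revert h; revert x; decide

lemma natCast_sum_val {n : ℕ} (f : Fin n → ZMod 2) :
    ((∑ i, (f i).val : ℕ) : ZMod 2) = ∑ i, f i := by
  push_cast
  simp [ZMod.natCast_val, ZMod.cast_id]

lemma neg_one_pow_of_odd_sum {n : ℕ} (f : Fin n → ZMod 2) (h : ∑ i, f i = 1) :
    (-1 : ℂ) ^ (∑ i, (f i).val) = -1 := by
  have h2 : ((∑ i, (f i).val : ℕ) : ZMod 2) = 1 := by rw [natCast_sum_val, h]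
  have hndvd : ¬ (2 ∣ ∑ i, (f i).val) := by
    intro hdvd
    rw [← ZMod.natCast_eq_zero_iff] at hdvd
    exact one_ne_zero (h2.symm.trans hdvd)
  have hodd : Odd (∑ i, (f i).val) := Nat.odd_iff.2 (by omega)
  exact hodd.neg_one_pow


/-- For a CSS code with full-rank check matrices `H_X, H_Z`
(`H_X H_Zᵀ = 0`, `0 < k_X + k_Z < n`) and code-space projector `Π_CSS = M_X M_Z`, the
XZ verification operator `Ω = (M_X + M_Z)/2`, with `M_X = ∏_{c_X}(1+X^{c_X})/2` and
`M_Z = ∏_{c_Z}(1+Z^{c_Z})/2`, has `λ_max((1−Π_CSS)Ω(1−Π_CSS)) = 1/2`; hence its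
spectral gap is `1/2`, independent of `n` and `k`. -/
theorem css_xz_strategy_spectral_gap {n kX kZ : ℕ}
    (hpos : 0 < kX + kZ) (hkn : kX + kZ < n)
    (HX : Fin kX → (Fin n → ZMod 2)) (HZ : Fin kZ → (Fin n → ZMod 2))
    (hrankX : LinearIndependent (ZMod 2) HX)
    (hrankZ : LinearIndependent (ZMod 2) HZ)
    (horth : ∀ a b, ∑ i, HX a i * HZ b i = 0)
    (MX MZ PiCSS Ω : Matrix (Fin n → ZMod 2) (Fin n → ZMod 2) ℂ)
    (hMX : MX = (List.ofFn fun a => (2 : ℂ)⁻¹ • (1 + Xop (HX a))).prod)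
    (hMZ : MZ = (List.ofFn fun a => (2 : ℂ)⁻¹ • (1 + Zop (HZ a))).prod)
    (hPi : PiCSS = MX * MZ)
    (hΩ : Ω = (2 : ℂ)⁻¹ • (MX + MZ))
    (hherm' : ((1 - PiCSS) * Ω * (1 - PiCSS)).IsHermitian) :
    (⨆ i, hherm'.eigenvalues i) = 1 / 2 := by
  -- Idempotence and commutation of the stabilizer projectors
  have hXmem : ∀ f ∈ (List.ofFn fun a => (2 : ℂ)⁻¹ • (1 + Xop (HX a))),
      ∃ a, f = (2 : ℂ)⁻¹ • (1 + Xop (HX a)) := by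
    intro f hf
    obtain ⟨a, ha⟩ := (List.mem_ofFn).1 hf
    exact ⟨a, ha.symm⟩
  have hZmem : ∀ f ∈ (List.ofFn fun a => (2 : ℂ)⁻¹ • (1 + Zop (HZ a))),
      ∃ a, f = (2 : ℂ)⁻¹ • (1 + Zop (HZ a)) := by
    intro f hf
    obtain ⟨a, ha⟩ := (List.mem_ofFn).1 hf
    exact ⟨a, ha.symm⟩
  have hXcomm : ∀ f ∈ (List.ofFn fun a => (2 : ℂ)⁻¹ • (1 + Xop (HX a))),
      ∀ g ∈ (List.ofFn fun a => (2 : ℂ)⁻¹ • (1 + Xop (HX a))), Commute f g := by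
    intro f hf g hg
    obtain ⟨a, rfl⟩ := hXmem f hf
    obtain ⟨b, rfl⟩ := hXmem g hg
    exact proj_comm _ _ (by show _ = _; rw [Xop_mul, Xop_mul, add_comm])
  have hZcomm : ∀ f ∈ (List.ofFn fun a => (2 : ℂ)⁻¹ • (1 + Zop (HZ a))),
      ∀ g ∈ (List.ofFn fun a => (2 : ℂ)⁻¹ • (1 + Zop (HZ a))), Commute f g := by
    intro f hf g hg
    obtain ⟨a, rfl⟩ := hZmem f hf
    obtain ⟨b, rfl⟩ := hZmem g hg
    exact proj_comm _ _ (by show _ = _; rw [Zop_mul, Zop_mul, add_comm])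
  have hXid : ∀ f ∈ (List.ofFn fun a => (2 : ℂ)⁻¹ • (1 + Xop (HX a))), f * f = f := by
    intro f hf
    obtain ⟨a, rfl⟩ := hXmem f hf
    exact proj_idem _ (Xop_sq _)
  have hZid : ∀ f ∈ (List.ofFn fun a => (2 : ℂ)⁻¹ • (1 + Zop (HZ a))), f * f = f := by
    intro f hf
    obtain ⟨a, rfl⟩ := hZmem f hf
    exact proj_idem _ (Zop_sq _)
  have hMXidem : MX * MX = MX := by rw [hMX]; exact list_prod_idem hXcomm hXid
  have hMZidem : MZ * MZ = MZ := by rw [hMZ]; exact list_prod_idem hZcomm hZid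
  have hcomm : MX * MZ = MZ * MX := by
    rw [hMX, hMZ]
    refine Commute.eq ?_
    refine Commute.list_prod_right _ _ fun g hg => ?_
    refine Commute.list_prod_left _ _ fun f hf => ?_
    obtain ⟨a, rfl⟩ := hXmem f hf
    obtain ⟨b, rfl⟩ := hZmem g hg
    refine proj_comm _ _ (XZ_comm _ _ ?_)
    rw [← horth a b]
    exact Finset.sum_congr rfl fun i _ => mul_comm _ _
  -- basic projector identities
  have hXPi : MX * PiCSS = PiCSS := by rw [hPi, ← mul_assoc, hMXidem]
  have hPiX : PiCSS * MX = PiCSS := by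
    rw [hPi, mul_assoc, ← hcomm, ← mul_assoc, hMXidem]
  have hPiZ : PiCSS * MZ = PiCSS := by rw [hPi, mul_assoc, hMZidem]
  have hZPi : MZ * PiCSS = PiCSS := by
    rw [hPi, ← mul_assoc, ← hcomm, mul_assoc, hMZidem]
  have hPiPi : PiCSS * PiCSS = PiCSS := by
    nth_rewrite 2 [hPi]
    rw [← mul_assoc, hPiX, hPiZ]
  -- the deformed operator
  set A := (1 - PiCSS) * Ω * (1 - PiCSS) with hAdef
  have hA : A = (2 : ℂ)⁻¹ • ((MX - PiCSS) + (MZ - PiCSS)) := by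
    rw [hAdef, hΩ, mul_smul_comm, smul_mul_assoc]
    congr 1
    simp only [Matrix.sub_mul, Matrix.mul_sub, Matrix.add_mul, Matrix.mul_add, Matrix.one_mul,
      Matrix.mul_one]
    rw [hPiX, hPiZ, hXPi, hZPi, hPiPi]
    abel
  have hPP : (MX - PiCSS) * (MX - PiCSS) = MX - PiCSS := by
    simp only [Matrix.sub_mul, Matrix.mul_sub]
    rw [hMXidem, hXPi, hPiX, hPiPi]
    abel
  have hQQ : (MZ - PiCSS) * (MZ - PiCSS) = MZ - PiCSS := by
    simp only [Matrix.sub_mul, Matrix.mul_sub]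
    rw [hMZidem, hZPi, hPiZ, hPiPi]
    abel
  have hPQ : (MX - PiCSS) * (MZ - PiCSS) = 0 := by
    simp only [Matrix.sub_mul, Matrix.mul_sub]
    rw [← hPi, hXPi, hPiZ, hPiPi]
    abel
  have hQP : (MZ - PiCSS) * (MX - PiCSS) = 0 := by
    simp only [Matrix.sub_mul, Matrix.mul_sub]
    rw [← hcomm, ← hPi, hZPi, hPiX, hPiPi]
    abel
  have hAA : A * A = (2 : ℂ)⁻¹ • A := by
    rw [hA, smul_mul_assoc, mul_smul_comm, Matrix.add_mul, Matrix.mul_add, Matrix.mul_add,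
      hPP, hQQ, hPQ, hQP, smul_smul, smul_smul, add_zero, zero_add]
  -- every eigenvalue is 0 or 1/2
  have hcancel : ∀ w : (Fin n → ZMod 2) → ℂ, w ≠ 0 → ∀ x y : ℂ, x • w = y • w → x = y := by
    intro w hw x y hxy
    have h0 : (x - y) • w = 0 := by rw [sub_smul, hxy, sub_self]
    rcases smul_eq_zero.1 h0 with h | h
    · exact sub_eq_zero.1 h
    · exact absurd h hw
  have hdich : ∀ i, hherm'.eigenvalues i = 0 ∨ hherm'.eigenvalues i = 1 / 2 := by
    intro i
    have hv := hherm'.mulVec_eigenvectorBasis i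
    set v : (Fin n → ZMod 2) → ℂ := ⇑(hherm'.eigenvectorBasis i) with hvdef
    set lam : ℝ := hherm'.eigenvalues i with hlam
    have hv' : A *ᵥ v = ((lam : ℂ)) • v := by
      rw [hv, RCLike.real_smul_eq_coe_smul (K := ℂ)]
      rfl
    have e1 : A *ᵥ (A *ᵥ v) = ((lam : ℂ) * lam) • v := by
      rw [hv', Matrix.mulVec_smul, hv', smul_smul]
    have e2 : A *ᵥ (A *ᵥ v) = ((2 : ℂ)⁻¹ * lam) • v := by
      rw [Matrix.mulVec_mulVec, hAA, Matrix.smul_mulVec, hv', smul_smul]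
    have hvne : v ≠ 0 := by
      intro h0
      exact hherm'.eigenvectorBasis.orthonormal.ne_zero i (by ext s; exact congrFun h0 s)
    have hcc : ((lam : ℂ) * lam) = (2 : ℂ)⁻¹ * lam := hcancel v hvne _ _ (e1.symm.trans e2)
    have hreal : lam * lam = 2⁻¹ * lam := by
      rw [show ((2 : ℂ)⁻¹ = ((2⁻¹ : ℝ) : ℂ)) by norm_num] at hcc
      exact_mod_cast hcc
    have hfactor : lam * (lam - 2⁻¹) = 0 := by ring_nf; nlinarith [hreal]
    rcases mul_eq_zero.1 hfactor with h | h
    · exact Or.inl h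
    · right
      have := sub_eq_zero.1 h
      rw [this]
      norm_num
  -- A is nonzero
  have hAne : A ≠ 0 := by
    intro hA0
    have hsum0 : (MX - PiCSS) + (MZ - PiCSS) = 0 := by
      have h2 := hA.symm.trans hA0
      rcases smul_eq_zero.1 h2 with h | h
      · norm_num at h
      · exact h
    have hP0 : MX - PiCSS = 0 := by
      calc MX - PiCSS
          = (MX - PiCSS) * (MX - PiCSS) + (MX - PiCSS) * (MZ - PiCSS) := by
            rw [hPP, hPQ, add_zero]
      _ = (MX - PiCSS) * ((MX - PiCSS) + (MZ - PiCSS)) := (Matrix.mul_add _ _ _).symm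
      _ = 0 := by rw [hsum0, Matrix.mul_zero]
    have hQ0 : MZ - PiCSS = 0 := by
      calc MZ - PiCSS
          = (MZ - PiCSS) * (MX - PiCSS) + (MZ - PiCSS) * (MZ - PiCSS) := by
            rw [hQQ, hQP, zero_add]
      _ = (MZ - PiCSS) * ((MX - PiCSS) + (MZ - PiCSS)) := (Matrix.mul_add _ _ _).symm
      _ = 0 := by rw [hsum0, Matrix.mul_zero]
    have hMXPi : MX = PiCSS := sub_eq_zero.1 hP0
    have hMZPi : MZ = PiCSS := sub_eq_zero.1 hQ0
    rcases (show 0 < kX ∨ 0 < kZ by omega) with hk | hk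
    · -- kX > 0 : character vector w kills MX, hence MZ = PiCSS would be killed too
      set a : Fin kX := ⟨0, hk⟩
      have hHa : HX a ≠ 0 := hrankX.ne_zero a
      obtain ⟨i, hi⟩ : ∃ i, HX a i ≠ 0 := by
        by_contra hno
        push_neg at hno
        exact hHa (funext fun i => hno i)
      have hi1 : HX a i = 1 := zmod2_ne_zero hi
      set d : Fin n → ZMod 2 := Pi.single i 1 with hd
      set w : (Fin n → ZMod 2) → ℂ := fun s => (-1 : ℂ) ^ (∑ j, (d j * s j).val) with hw
      have hdc : ∑ j, d j * HX a j = 1 := by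
        rw [Finset.sum_eq_single i (fun u _ hu => by simp [hd, Pi.single_apply, hu]) (by simp)]
        simp [hd, hi1]
      have hXw : w ᵥ* Xop (HX a) = -w := by
        rw [hw, chi_vecMul_Xop, funext_iff] -- entrywise
        intro s
        rw [neg_one_pow_of_odd_sum _ hdc]
        simp
      have hfw : w ᵥ* ((2 : ℂ)⁻¹ • (1 + Xop (HX a))) = 0 := by
        rw [vecMul_smulC, Matrix.vecMul_add, Matrix.vecMul_one, hXw]
        simp
      have hwMX : w ᵥ* MX = 0 := by
        have hmem : ((2 : ℂ)⁻¹ • (1 + Xop (HX a)))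
            ∈ (List.ofFn fun a => (2 : ℂ)⁻¹ • (1 + Xop (HX a))) :=
          (List.mem_ofFn).2 ⟨a, rfl⟩
        have habs := list_prod_absorb_left hXcomm hXid hmem
        rw [hMX, ← habs, ← Matrix.vecMul_vecMul, hfw, Matrix.zero_vecMul]
      have hwMZ : w ᵥ* MZ = 0 := by
        rw [hMZPi, hPi, ← Matrix.vecMul_vecMul, hwMX, Matrix.zero_vecMul]
      have hZe0 : MZ *ᵥ (Pi.single 0 1 : (Fin n → ZMod 2) → ℂ) = Pi.single 0 1 := by
        rw [hMZ]
        refine list_prod_mulVec_fixed _ _ fun f hf => ?_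
        obtain ⟨b, rfl⟩ := hZmem f hf
        rw [Matrix.smul_mulVec, Matrix.add_mulVec, Matrix.one_mulVec, Zop_mulVec_single]
        have hz : (∑ j, (HZ b j * (0 : Fin n → ZMod 2) j).val) = 0 := by simp
        rw [hz, pow_zero, one_smul]
        funext s
        simp only [Pi.smul_apply, Pi.add_apply, smul_eq_mul]
        ring
      have h1 : w ⬝ᵥ (MZ *ᵥ (Pi.single 0 1 : (Fin n → ZMod 2) → ℂ)) = 1 := by
        rw [hZe0, dotProduct_single]
        have : w 0 = 1 := by simp [hw]
        rw [this, one_mul]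
      rw [Matrix.dotProduct_mulVec, hwMZ, zero_dotProduct] at h1
      exact zero_ne_one h1
    · -- kZ > 0 : basis vector e_t killed by MZ, but not by MX
      set b : Fin kZ := ⟨0, hk⟩
      have hHb : HZ b ≠ 0 := hrankZ.ne_zero b
      obtain ⟨i, hi⟩ : ∃ i, HZ b i ≠ 0 := by
        by_contra hno
        push_neg at hno
        exact hHb (funext fun i => hno i)
      have hi1 : HZ b i = 1 := zmod2_ne_zero hi
      set t : Fin n → ZMod 2 := Pi.single i 1 with ht
      have hdt : ∑ j, HZ b j * t j = 1 := by
        rw [Finset.sum_eq_single i (fun u _ hu => by simp [ht, Pi.single_apply, hu]) (by simp)]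
        simp [ht, hi1]
      have hZt : Zop (HZ b) *ᵥ (Pi.single t 1 : (Fin n → ZMod 2) → ℂ) = -(Pi.single t 1) := by
        rw [Zop_mulVec_single, neg_one_pow_of_odd_sum _ hdt, neg_one_smul]
      have hft : ((2 : ℂ)⁻¹ • (1 + Zop (HZ b))) *ᵥ (Pi.single t 1 : (Fin n → ZMod 2) → ℂ)
          = 0 := by
        rw [Matrix.smul_mulVec, Matrix.add_mulVec, Matrix.one_mulVec, hZt]
        simp
      have hMZt : MZ *ᵥ (Pi.single t 1 : (Fin n → ZMod 2) → ℂ) = 0 := by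
        have hmem : ((2 : ℂ)⁻¹ • (1 + Zop (HZ b)))
            ∈ (List.ofFn fun a => (2 : ℂ)⁻¹ • (1 + Zop (HZ a))) :=
          (List.mem_ofFn).2 ⟨b, rfl⟩
        have habs := list_prod_absorb_right hZcomm hZid hmem
        rw [hMZ, ← habs, ← Matrix.mulVec_mulVec, hft, Matrix.mulVec_zero]
      have hMXt : MX *ᵥ (Pi.single t 1 : (Fin n → ZMod 2) → ℂ) = 0 := by
        rw [hMXPi, hPi, ← Matrix.mulVec_mulVec, hMZt, Matrix.mulVec_zero]
      have huMX : (fun _ => (1 : ℂ)) ᵥ* MX = (fun _ => (1 : ℂ)) := by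
        rw [hMX]
        refine list_prod_vecMul_fixed _ _ fun f hf => ?_
        obtain ⟨c, rfl⟩ := hXmem f hf
        rw [vecMul_smulC, Matrix.vecMul_add, Matrix.vecMul_one, ones_vecMul_Xop]
        funext s
        simp only [Pi.smul_apply, Pi.add_apply, smul_eq_mul]
        norm_num
      have h1 : (fun _ => (1 : ℂ)) ⬝ᵥ (MX *ᵥ (Pi.single t 1 : (Fin n → ZMod 2) → ℂ)) = 1 := by
        rw [Matrix.dotProduct_mulVec, huMX, dotProduct_single, one_mul]
      rw [hMXt, dotProduct_zero] at h1
      exact zero_ne_one h1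
  -- conclude about the supremum
  have hbdd : ∀ i, hherm'.eigenvalues i ≤ 1 / 2 := by
    intro i
    rcases hdich i with h | h <;> rw [h] <;> norm_num
  have hex : ∃ i, hherm'.eigenvalues i = 1 / 2 := by
    by_contra hno
    push_neg at hno
    have hall : hherm'.eigenvalues = 0 := funext fun i => (hdich i).resolve_right (hno i)
    apply hAne
    have hst := hherm'.spectral_theorem
    rwa [hall, Pi.comp_zero, RCLike.ofReal_zero,
      (by rfl : Function.const _ (0 : ℂ) = fun _ => 0), Matrix.diagonal_zero,
      map_zero] at hst
  obtain ⟨i0, hi0⟩ := hex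
  refine le_antisymm (ciSup_le hbdd) ?_
  calc (1 / 2 : ℝ) = hherm'.eigenvalues i0 := hi0.symm
  _ ≤ ⨆ i, hherm'.eigenvalues i := le_ciSup (Set.finite_range _).bddAbove i0
end
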